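/- arXiv:2503.12300 — 10 statements merged into one kernel-verified Lean document; each statement's English description precedes it below -/
import Mathlib

section
/- Let G be a finite group and p a prime such that |G : Z(G)| = p^2. Then the Chermak-Delgado lattice CD(G) is exactly the set of subgroups H of G with Z(G) ≤ H; moreover every subgroup H with Z(G) < H < G is abelian, and there are exactly p+1 such subgroups (so CD(G) is a quasi-antichain of width p+1). -/
/-- The Chermak-Delgado measure of a subgroup `H` of `G`: `|H| · |C_G(H)|`. -/
noncomputable def cdMeasure (G : Type*) [Group G] (H : Subgroup G) : ℕ :=
  Nat.card H * Nat.card (Subgroup.centralizer (H : Set G))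

/-- The Chermak-Delgado lattice of `G`: the set of subgroups whose
Chermak-Delgado measure is maximal. -/
def CD (G : Type*) [Group G] : Set (Subgroup G) :=
  {H : Subgroup G | ∀ K : Subgroup G, cdMeasure G K ≤ cdMeasure G H}

/-!
Adjoining `Z = Z(G)` to a subgroup `K` enlarges `K` without changing its centralizer, so
`m_G(K) ≤ m_G(ZK)` with equality only if `Z ≤ K`. When `|G : Z| = p²`, a subgroup strictly
between `Z` and `G` has index `p`, so it is `Z⟨x⟩` for each of its elements `x ∉ Z`: it is
abelian, hence its own centralizer, and every subgroup above `Z` has measure `|G||Z|`.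
These subgroups partition `G \ Z` into blocks of `(p - 1)|Z|` elements, and
`|G \ Z| = (p² - 1)|Z|` leaves room for exactly `p + 1` of them.
-/

open Subgroup

section CenterSup

variable {G : Type*} [Group G]

theorem Subgroup.centralizer_center_sup (K : Subgroup G) :
    centralizer ((center G ⊔ K : Subgroup G) : Set G) = centralizer (K : Set G) :=
  le_antisymm (centralizer_le (SetLike.coe_subset_coe.mpr le_sup_right)) <|
    le_centralizer_iff.mp (sup_le (center_le_centralizer _) (le_centralizer_iff.mp le_rfl))

instance Subgroup.isMulCommutative_center_sup_zpowers (x : G) :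
    IsMulCommutative (center G ⊔ zpowers x : Subgroup G) := by
  rw [← le_centralizer_iff_isMulCommutative, centralizer_center_sup]
  exact sup_le (center_le_centralizer _)
    ((le_centralizer_iff_isMulCommutative (K := zpowers x)).mpr inferInstance)

theorem Subgroup.center_lt_center_sup_zpowers {x : G} (hx : x ∉ center G) :
    center G < center G ⊔ zpowers x :=
  lt_of_le_of_ne le_sup_left fun h => hx (h ▸ mem_sup_right (mem_zpowers x))

theorem Subgroup.center_sup_zpowers_lt_top {x : G} (hx : x ∉ center G) :
    center G ⊔ zpowers x < ⊤ := by
  refine lt_top_iff_ne_top.mpr fun htop => hx ?_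
  have hcentralizer := centralizer_center_sup (zpowers x)
  rw [htop, coe_top, centralizer_univ] at hcentralizer
  rw [hcentralizer]
  exact (le_centralizer_iff_isMulCommutative (K := zpowers x)).mpr inferInstance (mem_zpowers x)

theorem Subgroup.cdMeasure_le_cdMeasure_center_sup [Finite G] (K : Subgroup G) :
    cdMeasure G K ≤ cdMeasure G (center G ⊔ K) := by
  rw [cdMeasure, cdMeasure, centralizer_center_sup]
  exact Nat.mul_le_mul_right _ (card_le_of_le le_sup_right)

theorem Subgroup.center_le_of_cdMeasure_center_sup_le [Finite G] {K : Subgroup G}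
    (h : cdMeasure G (center G ⊔ K) ≤ cdMeasure G K) : center G ≤ K := by
  rw [cdMeasure, cdMeasure, centralizer_center_sup] at h
  have hcard := Nat.le_of_mul_le_mul_right h Nat.card_pos
  rw [eq_of_le_of_card_ge le_sup_right hcard]
  exact le_sup_left

end CenterSup

section CenterIndexPrimeSq

variable {G : Type*} [Group G] {p : ℕ} {H K : Subgroup G}

theorem Subgroup.index_eq_of_center_lt_of_lt_top (hp : p.Prime)
    (hZ : (center G).index = p ^ 2) (h1 : center G < H) (h2 : H < ⊤) : H.index = p :=
  ((hp.mul_eq_prime_sq_iff (relIndex_eq_one.not.mpr h1.not_ge) (index_eq_one.not.mpr h2.ne)).mp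
    ((relIndex_mul_index h1.le).trans hZ)).2

theorem Subgroup.card_eq_of_center_lt_of_lt_top (hp : p.Prime)
    (hZ : (center G).index = p ^ 2) (h1 : center G < H) (h2 : H < ⊤) :
    Nat.card H = p * Nat.card (center G) := by
  have hG := (center G).index_mul_card
  rw [hZ, ← H.index_mul_card, index_eq_of_center_lt_of_lt_top hp hZ h1 h2, sq, mul_assoc] at hG
  exact (Nat.eq_of_mul_eq_mul_left hp.pos hG).symm

theorem Subgroup.eq_of_center_lt_of_le_of_lt_top (hp : p.Prime)
    (hZ : (center G).index = p ^ 2) (h1 : center G < H) (hHK : H ≤ K) (h2 : K < ⊤) :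
    H = K := by
  have hrel := relIndex_mul_index hHK
  rw [index_eq_of_center_lt_of_lt_top hp hZ h1 (hHK.trans_lt h2),
    index_eq_of_center_lt_of_lt_top hp hZ (h1.trans_le hHK) h2] at hrel
  exact le_antisymm hHK (relIndex_eq_one.mp
    (Nat.eq_of_mul_eq_mul_right hp.pos (hrel.trans (one_mul p).symm)))

theorem Subgroup.eq_center_sup_zpowers_of_center_lt_of_lt_top (hp : p.Prime)
    (hZ : (center G).index = p ^ 2) (h1 : center G < H) (h2 : H < ⊤) {x : G} (hxH : x ∈ H)
    (hx : x ∉ center G) : H = center G ⊔ zpowers x :=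
  (eq_of_center_lt_of_le_of_lt_top hp hZ (center_lt_center_sup_zpowers hx)
    (sup_le h1.le (zpowers_le.mpr hxH)) h2).symm

theorem Subgroup.isMulCommutative_of_center_lt_of_lt_top (hp : p.Prime)
    (hZ : (center G).index = p ^ 2) (h1 : center G < H) (h2 : H < ⊤) : IsMulCommutative H := by
  obtain ⟨x, hxH, hx⟩ := SetLike.exists_of_lt h1
  rw [eq_center_sup_zpowers_of_center_lt_of_lt_top hp hZ h1 h2 hxH hx]
  infer_instance

theorem Subgroup.centralizer_eq_self_of_center_lt_of_lt_top (hp : p.Prime)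
    (hZ : (center G).index = p ^ 2) (h1 : center G < H) (h2 : H < ⊤) :
    centralizer (H : Set G) = H := by
  have hle : H ≤ centralizer (H : Set G) :=
    le_centralizer_iff_isMulCommutative.mpr (isMulCommutative_of_center_lt_of_lt_top hp hZ h1 h2)
  have hlt : centralizer (H : Set G) < ⊤ :=
    lt_top_iff_ne_top.mpr fun htop => h1.not_ge (centralizer_eq_top_iff_subset.mp htop)
  exact (eq_of_center_lt_of_le_of_lt_top hp hZ h1 hle hlt).symm

theorem Subgroup.cdMeasure_of_center_le (hp : p.Prime) (hZ : (center G).index = p ^ 2)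
    (h : center G ≤ H) : cdMeasure G H = Nat.card G * Nat.card (center G) := by
  rcases h.lt_or_eq with h1 | rfl
  · rcases eq_or_ne H ⊤ with rfl | h2
    · rw [cdMeasure, coe_top, centralizer_univ, card_top]
    · rw [cdMeasure, centralizer_eq_self_of_center_lt_of_lt_top hp hZ h1 h2.lt_top,
        card_eq_of_center_lt_of_lt_top hp hZ h1 h2.lt_top, ← (center G).index_mul_card, hZ]
      ring
  · rw [cdMeasure, centralizer_eq_top_iff_subset.mpr subset_rfl, card_top, mul_comm]

theorem Subgroup.ncard_setOf_center_sup_zpowers_eq [Finite G] (hp : p.Prime)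
    (hZ : (center G).index = p ^ 2) (h1 : center G < H) (h2 : H < ⊤) :
    {x : G | x ∉ center G ∧ center G ⊔ zpowers x = H}.ncard =
      (p - 1) * Nat.card (center G) := by
  have hfiber :
      {x : G | x ∉ center G ∧ center G ⊔ zpowers x = H} = (H : Set G) \ center G := by
    ext x
    constructor
    · rintro ⟨hx, rfl⟩
      exact ⟨mem_sup_right (mem_zpowers x), hx⟩
    · rintro ⟨hxH, hx⟩
      exact ⟨hx, (eq_center_sup_zpowers_of_center_lt_of_lt_top hp hZ h1 h2 hxH hx).symm⟩
  rw [hfiber, Set.ncard_sdiff h1.le]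
  simp only [← Nat.card_coe_set_eq, SetLike.coe_sort_coe]
  rw [card_eq_of_center_lt_of_lt_top hp hZ h1 h2, Nat.sub_mul, one_mul]

theorem Subgroup.ncard_setOf_center_lt_lt_top [Finite G] (hp : p.Prime)
    (hZ : (center G).index = p ^ 2) :
    {H : Subgroup G | center G < H ∧ H < ⊤}.ncard = p + 1 := by
  classical
  have := Fintype.ofFinite G
  set M := {H : Subgroup G | center G < H ∧ H < ⊤}
  have hmaps : Set.MapsTo (fun x => center G ⊔ zpowers x) ((center G : Set G)ᶜ.toFinset : Set G)
      M.toFinite.toFinset := by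
    intro x hx
    simp only [Set.coe_toFinset, Set.mem_compl_iff, SetLike.mem_coe] at hx
    simp only [Set.Finite.coe_toFinset]
    exact ⟨center_lt_center_sup_zpowers hx, center_sup_zpowers_lt_top hx⟩
  have hsum := Finset.card_eq_sum_card_fiberwise hmaps
  simp only [← Set.ncard_coe_finset, Finset.coe_filter, Set.coe_toFinset, Set.mem_toFinset,
    Set.mem_compl_iff, SetLike.mem_coe] at hsum
  rw [Finset.sum_congr rfl fun H hH => ncard_setOf_center_sup_zpowers_eq hp hZ
      ((Set.Finite.mem_toFinset _).mp hH).1 ((Set.Finite.mem_toFinset _).mp hH).2,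
    Finset.sum_const, smul_eq_mul, ← Set.ncard_eq_toFinset_card, Set.ncard_compl,
    ← Nat.card_coe_set_eq, SetLike.coe_sort_coe, ← (center G).index_mul_card, hZ,
    ← Nat.sub_one_mul] at hsum
  have hfactor : p ^ 2 - 1 = (p + 1) * (p - 1) := by simpa using Nat.sq_sub_sq p 1
  rw [hfactor, mul_assoc] at hsum
  have hpos : 0 < (p - 1) * Nat.card (center G) :=
    Nat.mul_pos (Nat.sub_pos_of_lt hp.one_lt) Nat.card_pos
  exact (Nat.eq_of_mul_eq_mul_right hpos hsum).symm

end CenterIndexPrimeSq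

theorem cd_eq_setOf_center_le {G : Type*} [Group G] [Finite G] {p : ℕ} (hp : p.Prime)
    (hZ : (center G).index = p ^ 2) : CD G = {H : Subgroup G | center G ≤ H} := by
  ext H
  refine ⟨fun hH => center_le_of_cdMeasure_center_sup_le (hH _), fun h K => ?_⟩
  rw [cdMeasure_of_center_le hp hZ h, ← cdMeasure_of_center_le hp hZ (le_sup_left (b := K))]
  exact cdMeasure_le_cdMeasure_center_sup K

theorem stmt_0 (G : Type*) [Group G] [Finite G] (p : ℕ) (hp : p.Prime)
    (hZ : (Subgroup.center G).index = p ^ 2) :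
    CD G = {H : Subgroup G | Subgroup.center G ≤ H} ∧
    (∀ H : Subgroup G, Subgroup.center G < H → H < ⊤ → IsMulCommutative H) ∧
    {H : Subgroup G | Subgroup.center G < H ∧ H < ⊤}.ncard = p + 1 :=
  ⟨cd_eq_setOf_center_le hp hZ,
    fun _ h1 h2 => isMulCommutative_of_center_lt_of_lt_top hp hZ h1 h2,
    ncard_setOf_center_lt_lt_top hp hZ⟩
end

section
/- Let G be a finite group, p a prime, and let A be a subgroup of maximum order among the self-centralizing subgroups of G. If |G : A| = p and |G : Z(G)| = p^i for some integer i > 2, then CD(G) = {A}. -/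
namespace Subgroup

variable {G : Type*} [Group G]

theorem card_mul_relIndex {H K : Subgroup G} (h : H ≤ K) :
    Nat.card H * H.relIndex K = Nat.card K := by
  rw [← relIndex_bot_left, ← relIndex_bot_left]
  exact relIndex_mul_relIndex _ _ _ bot_le h

theorem card_mul_card_le_card_inf_mul_card [Finite G] {H K L : Subgroup G}
    (hH : H ≤ L) (hK : K ≤ L) :
    Nat.card H * Nat.card K ≤ Nat.card (H ⊓ K : Subgroup G) * Nat.card L := by
  have hrel : K.relIndex H ≤ K.relIndex L :=
    relIndex_le_of_le_right hH (K.subgroupOf L).index_ne_zero_of_finite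
  calc Nat.card H * Nat.card K
      = Nat.card (H ⊓ K : Subgroup G) * K.relIndex H * Nat.card K := by
        rw [← inf_relIndex_left, card_mul_relIndex inf_le_left]
    _ ≤ Nat.card (H ⊓ K : Subgroup G) * K.relIndex L * Nat.card K := by gcongr
    _ = Nat.card (H ⊓ K : Subgroup G) * Nat.card L := by
        rw [mul_assoc, mul_comm (K.relIndex L), card_mul_relIndex hK]

theorem centralizer_inf_centralizer_le_centralizer_sup (H K : Subgroup G) :
    centralizer (H : Set G) ⊓ centralizer (K : Set G) ≤
      centralizer ((H ⊔ K : Subgroup G) : Set G) :=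
  le_centralizer_iff.mp <| sup_le (le_centralizer_iff.mpr inf_le_left)
    (le_centralizer_iff.mpr inf_le_right)

theorem sup_eq_top_of_prime_index {A H : Subgroup G} (hA : A.index.Prime) (hHA : ¬H ≤ A) :
    H ⊔ A = ⊤ := by
  have : A.FiniteIndex := ⟨hA.ne_zero⟩
  have hlt : (H ⊔ A).index < A.index :=
    index_strictAnti (lt_of_le_of_ne le_sup_right fun h => hHA (h ▸ le_sup_left))
  rcases hA.eq_one_or_self_of_dvd _ (index_dvd_of_le le_sup_right) with h | h
  · exact index_eq_one.mp h
  · omega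

end Subgroup

open Subgroup

section ChermakDelgado

variable {G : Type*} [Group G]

theorem cdMeasure_top : cdMeasure G ⊤ = Nat.card G * Nat.card (center G) := by
  rw [cdMeasure, coe_top, centralizer_univ, card_top]

theorem cdMeasure_of_centralizer_eq {A : Subgroup G} (hA : centralizer (A : Set G) = A) :
    cdMeasure G A = Nat.card A * Nat.card A := by
  rw [cdMeasure, hA]

variable [Finite G]

theorem cdMeasure_mul_cdMeasure_le (H K : Subgroup G) :
    cdMeasure G H * cdMeasure G K ≤ cdMeasure G (H ⊓ K) * cdMeasure G (H ⊔ K) := by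
  have hsub := card_mul_card_le_card_inf_mul_card (le_sup_left : H ≤ H ⊔ K) le_sup_right
  have hcent := card_mul_card_le_card_inf_mul_card
    (centralizer_le (SetLike.coe_subset_coe.mpr (inf_le_left : H ⊓ K ≤ H)))
    (centralizer_le (SetLike.coe_subset_coe.mpr (inf_le_right : H ⊓ K ≤ K)))
  have hsup := card_le_of_le (centralizer_inf_centralizer_le_centralizer_sup H K)
  calc cdMeasure G H * cdMeasure G K
      = (Nat.card H * Nat.card K) *
        (Nat.card (centralizer (H : Set G)) * Nat.card (centralizer (K : Set G))) := by
        rw [cdMeasure, cdMeasure]; ring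
    _ ≤ (Nat.card (H ⊓ K : Subgroup G) * Nat.card (H ⊔ K : Subgroup G)) *
        (Nat.card (centralizer (H : Set G) ⊓ centralizer (K : Set G) : Subgroup G) *
          Nat.card (centralizer ((H ⊓ K : Subgroup G) : Set G))) := Nat.mul_le_mul hsub hcent
    _ ≤ (Nat.card (H ⊓ K : Subgroup G) * Nat.card (H ⊔ K : Subgroup G)) *
        (Nat.card (centralizer ((H ⊔ K : Subgroup G) : Set G)) *
          Nat.card (centralizer ((H ⊓ K : Subgroup G) : Set G))) := by gcongr
    _ = cdMeasure G (H ⊓ K) * cdMeasure G (H ⊔ K) := by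
        rw [cdMeasure, cdMeasure]; ring

theorem cdMeasure_le_cdMeasure_centralizer (H : Subgroup G) :
    cdMeasure G H ≤ cdMeasure G (centralizer (H : Set G)) := by
  rw [cdMeasure, cdMeasure, mul_comm]
  exact Nat.mul_le_mul_left _ (card_le_of_le (le_centralizer_iff.mpr le_rfl))

theorem centralizer_mem_CD {H : Subgroup G} (hH : H ∈ CD G) :
    centralizer (H : Set G) ∈ CD G :=
  fun K => (hH K).trans (cdMeasure_le_cdMeasure_centralizer H)

theorem CD_nonempty : (CD G).Nonempty := by
  have : Finite (Subgroup G) := Finite.of_injective _ SetLike.coe_injective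
  obtain ⟨M, hM⟩ := Finite.exists_max (cdMeasure G)
  exact ⟨M, hM⟩

theorem le_of_mem_CD_of_prime_index {A H : Subgroup G} (hA : A.index.Prime)
    (htop : cdMeasure G ⊤ < cdMeasure G A) (hH : H ∈ CD G) : H ≤ A := by
  by_contra hHA
  have hpos : 0 < cdMeasure G H := Nat.mul_pos Nat.card_pos Nat.card_pos
  have : cdMeasure G H * cdMeasure G A ≤ cdMeasure G H * cdMeasure G ⊤ :=
    calc cdMeasure G H * cdMeasure G A
        ≤ cdMeasure G (H ⊓ A) * cdMeasure G ⊤ := by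
          simpa only [sup_eq_top_of_prime_index hA hHA] using cdMeasure_mul_cdMeasure_le H A
      _ ≤ cdMeasure G H * cdMeasure G ⊤ := Nat.mul_le_mul_right _ (hH _)
  exact htop.not_ge (Nat.le_of_mul_le_mul_left this hpos)

theorem CD_eq_singleton_of_forall_le {A : Subgroup G} (hA : centralizer (A : Set G) = A)
    (hle : ∀ H ∈ CD G, H ≤ A) : CD G = {A} := by
  have hmem_eq : ∀ H ∈ CD G, H = A := by
    intro H hH
    have hCH : centralizer (H : Set G) = A :=
      le_antisymm (hle _ (centralizer_mem_CD hH))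
        (hA ▸ centralizer_le (SetLike.coe_subset_coe.mpr (hle H hH)))
    have hAH : cdMeasure G A ≤ cdMeasure G H := hH A
    rw [cdMeasure_of_centralizer_eq hA, cdMeasure, hCH] at hAH
    exact eq_of_le_of_card_ge (hle H hH) (Nat.le_of_mul_le_mul_right hAH Nat.card_pos)
  obtain ⟨M, hM⟩ := CD_nonempty (G := G)
  exact Set.eq_singleton_iff_unique_mem.mpr ⟨hmem_eq M hM ▸ hM, hmem_eq⟩

end ChermakDelgado

theorem cdMeasure_top_lt_of_index {G : Type*} [Group G] [Finite G] {p i : ℕ} (hp : p.Prime)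
    {A : Subgroup G} (hA : centralizer (A : Set G) = A) (hiA : A.index = p) (hi : 2 < i)
    (hZ : (center G).index = p ^ i) : cdMeasure G ⊤ < cdMeasure G A := by
  rw [cdMeasure_top, cdMeasure_of_centralizer_eq hA]
  have hAG : Nat.card A * p = Nat.card G := hiA ▸ card_mul_index A
  have hZG : Nat.card (center G) * p ^ i = Nat.card G := hZ ▸ card_mul_index _
  refine Nat.lt_of_mul_lt_mul_right (a := p ^ 2) ?_
  calc Nat.card G * Nat.card (center G) * p ^ 2
      < Nat.card G * Nat.card (center G) * p ^ i := by
        gcongr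
        · exact Nat.mul_pos Nat.card_pos Nat.card_pos
        · exact hp.one_lt
    _ = Nat.card G * Nat.card G := by rw [mul_assoc, hZG]
    _ = Nat.card A * Nat.card A * p ^ 2 := by rw [← hAG]; ring

theorem stmt_1_general (G : Type*) [Group G] [Finite G] (p : ℕ) (hp : p.Prime)
    (A : Subgroup G) (hA : Subgroup.centralizer (A : Set G) = A)
    (hiA : A.index = p) (i : ℕ) (hi : 2 < i)
    (hZ : (Subgroup.center G).index = p ^ i) :
    CD G = {A} :=
  CD_eq_singleton_of_forall_le hA fun _ hH =>
    le_of_mem_CD_of_prime_index (hiA ▸ hp) (cdMeasure_top_lt_of_index hp hA hiA hi hZ) hH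

theorem stmt_1 (G : Type*) [Group G] [Finite G] (p : ℕ) (hp : p.Prime)
    (A : Subgroup G) (hA : Subgroup.centralizer (A : Set G) = A)
    (hAmax : ∀ B : Subgroup G, Subgroup.centralizer (B : Set G) = B →
      Nat.card B ≤ Nat.card A)
    (hiA : A.index = p) (i : ℕ) (hi : 2 < i)
    (hZ : (Subgroup.center G).index = p ^ i) :
    CD G = {A} :=
  stmt_1_general G p hp A hA hiA i hi hZ
end

section
/- Let G be a finite group, let p be the smallest prime divisor of |G|, and let A be a subgroup of maximum order among the self-centralizing subgroups of G. If |G : A| = p and |G : Z(G)| > p^2, then CD(G) = {A}. -/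
/-!
For every subgroup `H`, `m(H) ≤ m(H ∩ C(H))`, and `H ∩ C(H)` is abelian. An abelian subgroup `D`
that is not self-centralizing lies properly in a self-centralizing `B`, so `p |D| ≤ |B| ≤ |A|`.
Either `C(D) = G`, and then `D ≤ Z(G)` is small because `|G : Z(G)| > p²`, or `|C(D)| ≤ |G| / p`;
in both cases `m(D) < |A|² = m(A)`. Hence `m* = |A|²`, attained only by self-centralizing
subgroups of order `|A|`. Two distinct such subgroups of index `p` generate `G`, so their
intersection is central of index at most `p²`, which is excluded.
-/

theorem Nat.le_of_dvd_of_forall_prime_le {n m p : ℕ} (hpmin : ∀ q, q.Prime → q ∣ n → p ≤ q)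
    (hn : n ≠ 0) (hm : m ∣ n) (hm1 : m ≠ 1) : p ≤ m :=
  (hpmin _ (minFac_prime hm1) ((minFac_dvd m).trans hm)).trans
    (minFac_le (pos_of_ne_zero (ne_zero_of_dvd_ne_zero hn hm)))

namespace Subgroup

variable {G : Type*} [Group G]

theorem relIndex_mul_card_of_le {H K : Subgroup G} (h : H ≤ K) :
    H.relIndex K * Nat.card H = Nat.card K := by
  rw [← Nat.card_congr (subgroupOfEquivOfLe h).toEquiv]
  exact index_mul_card _

theorem centralizer_eq_self_of_centralizer_inf_eq {H : Subgroup G}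
    (h : centralizer ((H ⊓ centralizer (H : Set G) : Subgroup G) : Set G) =
      H ⊓ centralizer (H : Set G)) :
    centralizer (H : Set G) = H := by
  have hHZ : H ≤ H ⊓ centralizer (H : Set G) := h ▸ le_centralizer_iff.mpr inf_le_right
  rw [inf_eq_left.mpr (hHZ.trans inf_le_right)] at h
  exact h

theorem inf_le_center_of_sup_eq_top {A H : Subgroup G} (hA : A ≤ centralizer (A : Set G))
    (hH : H ≤ centralizer (H : Set G)) (hsup : A ⊔ H = ⊤) : A ⊓ H ≤ center G := by
  have hAH : A ⊔ H ≤ centralizer ((A ⊓ H : Subgroup G) : Set G) :=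
    sup_le (hA.trans (centralizer_le (SetLike.coe_subset_coe.mpr inf_le_left)))
      (hH.trans (centralizer_le (SetLike.coe_subset_coe.mpr inf_le_right)))
  rw [hsup, ← le_centralizer_iff, coe_top, centralizer_univ] at hAH
  exact hAH

variable [Finite G]

theorem cdMeasure_le_cdMeasure_inf_centralizer (H : Subgroup G) :
    cdMeasure G H ≤ cdMeasure G (H ⊓ centralizer (H : Set G)) := by
  set Z := H ⊓ centralizer (H : Set G)
  have hHZ : H ≤ centralizer (Z : Set G) := le_centralizer_iff.mpr inf_le_right
  have hCHZ : centralizer (H : Set G) ≤ centralizer (Z : Set G) :=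
    centralizer_le (SetLike.coe_subset_coe.mpr inf_le_left)
  -- `|H : Z| = |H C(H) : C(H)| ≤ |C(Z) : C(H)|`, as `H ≤ C(Z)`
  have hrel : Z.relIndex H ≤ (centralizer (H : Set G)).relIndex (centralizer (Z : Set G)) :=
    (inf_relIndex_left H _).trans_le
      (relIndex_le_of_le_right hHZ isFiniteRelIndex_of_finiteIndex.relIndex_ne_zero)
  calc cdMeasure G H = Z.relIndex H * Nat.card Z * Nat.card (centralizer (H : Set G)) := by
        rw [cdMeasure, relIndex_mul_card_of_le inf_le_left]
    _ ≤ (centralizer (H : Set G)).relIndex (centralizer (Z : Set G)) * Nat.card Z *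
          Nat.card (centralizer (H : Set G)) := by
        gcongr
    _ = cdMeasure G Z := by
        rw [cdMeasure, ← relIndex_mul_card_of_le hCHZ]; ring

theorem exists_le_centralizer_eq_self {D : Subgroup G} (hD : D ≤ centralizer (D : Set G)) :
    ∃ B : Subgroup G, D ≤ B ∧ centralizer (B : Set G) = B := by
  obtain ⟨B, hDB, hB⟩ :=
    Finite.exists_le_maximal (p := fun K : Subgroup G => K ≤ centralizer (K : Set G)) hD
  refine ⟨B, hDB, le_antisymm (fun x hx => ?_) hB.prop⟩
  have hcomm : insert x (B : Set G) ⊆ centralizer (insert x (B : Set G)) := by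
    rintro a (rfl | ha) b (rfl | hb)
    · rfl
    · exact hx b hb
    · exact (hx a ha).symm
    · exact hB.prop ha b hb
  have hclosure :
      closure (insert x (B : Set G)) ≤ centralizer (closure (insert x (B : Set G)) : Set G) := by
    rwa [centralizer_closure, closure_le]
  exact hB.le_of_ge hclosure ((Set.subset_insert x _).trans subset_closure)
    (subset_closure (Set.mem_insert x _))

theorem mul_card_le_card_of_lt {p : ℕ} (hpmin : ∀ q, q.Prime → q ∣ Nat.card G → p ≤ q)
    {H K : Subgroup G} (h : H < K) : p * Nat.card H ≤ Nat.card K := by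
  have hrel : p ≤ H.relIndex K :=
    Nat.le_of_dvd_of_forall_prime_le hpmin Nat.card_pos.ne'
      ((relIndex_dvd_card H K).trans K.card_subgroup_dvd_card)
      (fun h1 => h.not_ge (relIndex_eq_one.mp h1))
  calc p * Nat.card H ≤ H.relIndex K * Nat.card H := Nat.mul_le_mul_right _ hrel
    _ = Nat.card K := relIndex_mul_card_of_le h.le

theorem sup_eq_top_of_index_eq_prime {p : ℕ} (hp : p.Prime) {A H : Subgroup G}
    (hA : A.index = p) (hH : H.index = p) (hne : A ≠ H) : A ⊔ H = ⊤ := by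
  rcases hp.eq_one_or_self_of_dvd _ (hA ▸ index_dvd_of_le (le_sup_left : A ≤ A ⊔ H)) with
    h | h
  · exact index_eq_one.mp h
  · have hHA : H ≤ A := by
      by_contra hHA
      have := index_strictAnti (left_lt_sup.mpr hHA)
      omega
    have := index_strictAnti (lt_of_le_of_ne hHA hne.symm)
    omega

theorem index_center_le_sq_of_index_eq_prime {p : ℕ} (hp : p.Prime) {A H : Subgroup G}
    (hA : A ≤ centralizer (A : Set G)) (hH : H ≤ centralizer (H : Set G))
    (hiA : A.index = p) (hiH : H.index = p) (hne : A ≠ H) : (center G).index ≤ p ^ 2 :=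
  calc (center G).index
      ≤ (A ⊓ H).index :=
        index_antitone <| inf_le_center_of_sup_eq_top hA hH <|
          sup_eq_top_of_index_eq_prime hp hiA hiH hne
    _ ≤ A.index * H.index := index_inf_le
    _ = p ^ 2 := by rw [hiA, hiH, sq]

theorem cdMeasure_mul_sq_lt_of_le_centralizer {p : ℕ} (hp : 1 < p)
    (hpmin : ∀ q, q.Prime → q ∣ Nat.card G → p ≤ q)
    (hself : ∀ B : Subgroup G, centralizer (B : Set G) = B → p * Nat.card B ≤ Nat.card G)
    (hZ : p ^ 2 < (center G).index) {D : Subgroup G} (hD : D ≤ centralizer (D : Set G))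
    (hne : centralizer (D : Set G) ≠ D) : cdMeasure G D * p ^ 2 < Nat.card G ^ 2 := by
  rcases eq_or_ne (centralizer (D : Set G)) ⊤ with htop | htop
  · have hDZ : Nat.card D ≤ Nat.card (center G) :=
      card_le_of_le (centralizer_eq_top_iff_subset.mp htop)
    have hZcard : p ^ 2 * Nat.card (center G) < Nat.card G := by
      rw [← (center G).index_mul_card]
      exact Nat.mul_lt_mul_of_pos_right hZ Nat.card_pos
    calc cdMeasure G D * p ^ 2 = p ^ 2 * Nat.card D * Nat.card G := by
          rw [cdMeasure, htop, card_top]; ring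
      _ < Nat.card G * Nat.card G :=
          Nat.mul_lt_mul_of_pos_right ((Nat.mul_le_mul_left _ hDZ).trans_lt hZcard) Nat.card_pos
      _ = Nat.card G ^ 2 := (sq _).symm
  · obtain ⟨B, hDB, hB⟩ := exists_le_centralizer_eq_self hD
    have hDB' : D < B := lt_of_le_of_ne hDB (by rintro rfl; exact hne hB)
    have hD : p * (p * Nat.card D) ≤ Nat.card G :=
      (Nat.mul_le_mul_left p (mul_card_le_card_of_lt hpmin hDB')).trans (hself B hB)
    have hC : p * Nat.card (centralizer (D : Set G)) ≤ Nat.card G :=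
      card_top (G := G) ▸ mul_card_le_card_of_lt hpmin (lt_top_iff_ne_top.mpr htop)
    have hpos : 0 < cdMeasure G D * p ^ 2 :=
      Nat.mul_pos (Nat.mul_pos Nat.card_pos Nat.card_pos) (pow_pos (zero_lt_one.trans hp) 2)
    calc cdMeasure G D * p ^ 2 < cdMeasure G D * p ^ 2 * p :=
          (Nat.lt_mul_iff_one_lt_right hpos).mpr hp
      _ = p * (p * Nat.card D) * (p * Nat.card (centralizer (D : Set G))) := by
          rw [cdMeasure]; ring
      _ ≤ Nat.card G ^ 2 := by rw [sq]; exact Nat.mul_le_mul hD hC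

theorem cdMeasure_mul_sq_lt_of_centralizer_ne {p : ℕ} (hp : 1 < p)
    (hpmin : ∀ q, q.Prime → q ∣ Nat.card G → p ≤ q)
    (hself : ∀ B : Subgroup G, centralizer (B : Set G) = B → p * Nat.card B ≤ Nat.card G)
    (hZ : p ^ 2 < (center G).index) {H : Subgroup G}
    (hne : centralizer (H : Set G) ≠ H) : cdMeasure G H * p ^ 2 < Nat.card G ^ 2 :=
  calc cdMeasure G H * p ^ 2 ≤ cdMeasure G (H ⊓ centralizer (H : Set G)) * p ^ 2 :=
        Nat.mul_le_mul_right _ (cdMeasure_le_cdMeasure_inf_centralizer H)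
    _ < Nat.card G ^ 2 :=
        cdMeasure_mul_sq_lt_of_le_centralizer hp hpmin hself hZ
          (le_centralizer_iff.mpr (inf_le_right.trans
            (centralizer_le (SetLike.coe_subset_coe.mpr inf_le_left))))
          (mt centralizer_eq_self_of_centralizer_inf_eq hne)

end Subgroup

open Subgroup

theorem stmt_2_general (G : Type*) [Group G] [Finite G] (p : ℕ) (hp : p.Prime)
    (hpmin : ∀ q : ℕ, q.Prime → q ∣ Nat.card G → p ≤ q)
    (A : Subgroup G) (hA : Subgroup.centralizer (A : Set G) = A)
    (hAmax : ∀ B : Subgroup G, Subgroup.centralizer (B : Set G) = B →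
      Nat.card B ≤ Nat.card A)
    (hiA : A.index = p) (hZ : p ^ 2 < (Subgroup.center G).index) :
    CD G = {A} := by
  have hGA : Nat.card G = p * Nat.card A := by rw [← hiA, index_mul_card]
  have hmA : cdMeasure G A = Nat.card A ^ 2 := by rw [cdMeasure, hA, sq]
  have hlt : ∀ H : Subgroup G, centralizer (H : Set G) ≠ H → cdMeasure G H < cdMeasure G A := by
    intro H hH
    have := cdMeasure_mul_sq_lt_of_centralizer_ne hp.one_lt hpmin
      (fun B hB => hGA ▸ Nat.mul_le_mul_left p (hAmax B hB)) hZ hH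
    rw [hGA, mul_pow, mul_comm, ← hmA] at this
    exact Nat.lt_of_mul_lt_mul_left this
  have hle : ∀ H : Subgroup G, centralizer (H : Set G) = H → cdMeasure G H ≤ cdMeasure G A :=
    fun H hH => by rw [cdMeasure, hH, hmA, sq]; exact Nat.mul_self_le_mul_self (hAmax H hH)
  have hA_mem : A ∈ CD G := fun H => by
    by_cases hH : centralizer (H : Set G) = H
    exacts [hle H hH, (hlt H hH).le]
  refine Set.eq_singleton_iff_unique_mem.mpr ⟨hA_mem, fun H hH => ?_⟩
  have hHc : centralizer (H : Set G) = H := by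
    by_contra hne
    exact (hlt H hne).not_ge (hH A)
  have hHA : Nat.card H = Nat.card A :=
    le_antisymm (hAmax H hHc) (Nat.mul_self_le_mul_self_iff.mp
      (by simpa only [cdMeasure, hA, hHc] using hH A))
  have hiH : H.index = p := by
    apply Nat.eq_of_mul_eq_mul_right (Nat.card_pos (α := A))
    rw [← hHA, index_mul_card, hHA, hGA]
  by_contra hne
  exact hZ.not_ge (index_center_le_sq_of_index_eq_prime hp hA.ge hHc.ge hiA hiH (Ne.symm hne))

theorem stmt_2 (G : Type*) [Group G] [Finite G] (p : ℕ) (hp : p.Prime)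
    (hpdvd : p ∣ Nat.card G)
    (hpmin : ∀ q : ℕ, q.Prime → q ∣ Nat.card G → p ≤ q)
    (A : Subgroup G) (hA : Subgroup.centralizer (A : Set G) = A)
    (hAmax : ∀ B : Subgroup G, Subgroup.centralizer (B : Set G) = B →
      Nat.card B ≤ Nat.card A)
    (hiA : A.index = p) (hZ : p ^ 2 < (Subgroup.center G).index) :
    CD G = {A} :=
  stmt_2_general G p hp hpmin A hA hAmax hiA hZ
end

section
/- Let G be a finite group, p a prime, and let A be a subgroup of maximum order among the self-centralizing subgroups of G. Suppose |G : A| = p^2 and |G : Z(G)| = p^4. Then CD(G) equals the union of: {Z(G), G}, the set of all subgroups B of G with |G : B| = p^2 and |G : C_G(B)| = p^2, the set of all subgroups T of G with |G : T| = p and |G : Z(T)| = p^3, and the set of centers Z(T) of all such subgroups T. Moreover, if there exists at least one subgroup T with |G : T| = p and |G : Z(T)| = p^3, then there are at least p+1 subgroups B with |G : B| = p^2 and |G : C_G(B)| = p^2. -/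
/-- The center of a subgroup `T` of `G`, regarded as a subgroup of `G`. -/
def centerIn {G : Type*} [Group G] (T : Subgroup G) : Subgroup G :=
  (Subgroup.center T).map T.subtype

open Subgroup

theorem le_iff_le_of_mul_eq_mul {a b x y : ℕ} (hb : 0 < b) (hx : 0 < x) (h : a * x = b * y) :
    a ≤ b ↔ y ≤ x := by
  constructor <;> intro hle <;> by_contra! hlt
  · nlinarith [Nat.mul_le_mul_right x hle, Nat.mul_lt_mul_of_pos_left hlt hb]
  · nlinarith [Nat.mul_le_mul_left b hle, Nat.mul_lt_mul_of_pos_right hlt hx]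

theorem eq_prime_of_mul_eq_sq {p a b : ℕ} (hp : p.Prime) (h : a * b = p ^ 2)
    (ha : a ≠ 1) (hb : b ≠ 1) : a = p := by
  obtain ⟨i, hi, rfl⟩ := (Nat.dvd_prime_pow hp).mp (Dvd.intro b h)
  interval_cases i
  · simp at ha
  · simp
  · exact absurd (Nat.eq_of_mul_eq_mul_left (pow_pos hp.pos 2) (h.trans (mul_one _).symm)) hb

section

variable {G : Type*} [Group G]

theorem centerIn_eq_inf_centralizer (T : Subgroup G) :
    centerIn T = T ⊓ centralizer (T : Set G) := by
  ext x
  simp only [centerIn, mem_map, mem_inf, mem_center_iff, mem_centralizer_iff, coe_subtype]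
  constructor
  · rintro ⟨⟨y, hy⟩, hc, rfl⟩
    exact ⟨hy, fun h hh => congrArg Subtype.val (hc ⟨h, hh⟩)⟩
  · rintro ⟨hxT, hc⟩
    exact ⟨⟨x, hxT⟩, fun g => Subtype.ext (hc g g.2), rfl⟩

theorem centralizer_centralizer_centralizer (H : Subgroup G) :
    centralizer (centralizer (centralizer (H : Set G) : Set G) : Set G) =
      centralizer (H : Set G) :=
  SetLike.coe_injective (Set.centralizer_centralizer_centralizer (H : Set G))

theorem centralizer_sup_center (H : Subgroup G) :
    centralizer ((H ⊔ center G : Subgroup G) : Set G) = centralizer (H : Set G) :=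
  (centralizer_le (SetLike.coe_subset_coe.mpr le_sup_left)).antisymm <| le_centralizer_iff.mp <|
    sup_le (le_centralizer_iff.mp le_rfl) (center_le_centralizer _)

theorem centerIn_le (T : Subgroup G) : centerIn T ≤ T :=
  (centerIn_eq_inf_centralizer T).trans_le inf_le_left

theorem centerIn_le_centralizer (T : Subgroup G) : centerIn T ≤ centralizer (T : Set G) :=
  (centerIn_eq_inf_centralizer T).trans_le inf_le_right

theorem sup_zpowers_le_centralizer {N : Subgroup G} {x : G}
    (hN : N ≤ centralizer (N : Set G)) (hx : x ∈ centralizer (N : Set G)) :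
    N ⊔ zpowers x ≤ centralizer ((N ⊔ zpowers x : Subgroup G) : Set G) := by
  have hxN : zpowers x ≤ centralizer (N : Set G) := zpowers_le.mpr hx
  refine sup_le (le_centralizer_iff.mp (sup_le hN hxN)) (le_centralizer_iff.mp (sup_le ?_ ?_))
  · exact le_centralizer_iff.mp hxN
  · exact le_centralizer _

theorem le_centralizer_self_of_relIndex_prime {N B : Subgroup G} (hNB : N ≤ B)
    (hN : N ≤ centralizer (B : Set G)) (hp : (N.relIndex B).Prime) :
    B ≤ centralizer (B : Set G) := by
  obtain ⟨x, hxB, hxN⟩ : ∃ x ∈ B, x ∉ N :=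
    SetLike.not_le_iff_exists.mp fun hBN => hp.ne_one (relIndex_eq_one.mpr hBN)
  set M := N ⊔ zpowers x
  have hMB : M ≤ B := sup_le hNB (zpowers_le.mpr hxB)
  have hNM : N.relIndex M ≠ 1 := fun h => hxN (relIndex_eq_one.mp h (mem_sup_right (mem_zpowers x)))
  rw [← relIndex_mul_relIndex N M B le_sup_left hMB, Nat.prime_mul_iff] at hp
  have hBM : B ≤ M := relIndex_eq_one.mp (hp.resolve_right fun h => hNM h.2).2
  have hM : M ≤ centralizer (M : Set G) :=
    sup_zpowers_le_centralizer (hN.trans (centralizer_le hNB)) (le_centralizer_iff.mp hN hxB)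
  exact hBM.trans (hM.trans (centralizer_le hBM))

theorem card_mul_card_eq_card_sup_mul_card_inf {H K : Subgroup G}
    (hK : K ≤ centralizer (H : Set G)) :
    Nat.card H * Nat.card K = Nat.card ↥(H ⊔ K) * Nat.card ↥(H ⊓ K) := by
  let φ := H.subtype.noncommCoprod K.subtype fun h k => mem_centralizer_iff.mp (hK k.2) h h.2
  have hrange : φ.range = H ⊔ K := (MonoidHom.noncommCoprod_range _ _ _).trans <| by
    rw [range_subtype, range_subtype]
  have hmul (y : φ.ker) : (y.1.1 : G) * y.1.2 = 1 := y.2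
  have hker : φ.ker ≃ ↥(H ⊓ K) :=
    { toFun := fun y => ⟨y.1.1, y.1.1.2, by
        rw [eq_inv_of_mul_eq_one_left (hmul y)]; exact K.inv_mem y.1.2.2⟩
      invFun := fun x => ⟨(⟨x, x.2.1⟩, ⟨(x : G)⁻¹, inv_mem x.2.2⟩), mul_inv_cancel (x : G)⟩
      left_inv := fun y => Subtype.ext <| Prod.ext rfl <| Subtype.ext
        (eq_inv_of_mul_eq_one_right (hmul y)).symm
      right_inv := fun _ => rfl }
  rw [← Nat.card_prod, ← card_mul_index φ.ker, index_ker, hrange, Nat.card_congr hker, mul_comm]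

theorem index_mul_index_eq_index_sup_mul_index_inf [Finite G] {H K : Subgroup G}
    (hK : K ≤ centralizer (H : Set G)) :
    H.index * K.index = (H ⊔ K).index * (H ⊓ K).index := by
  have hcard := card_mul_card_eq_card_sup_mul_card_inf hK
  have hpos : 0 < Nat.card H * Nat.card K := Nat.mul_pos Nat.card_pos Nat.card_pos
  refine Nat.eq_of_mul_eq_mul_right hpos ?_
  calc H.index * K.index * (Nat.card H * Nat.card K)
      = (Nat.card H * H.index) * (Nat.card K * K.index) := by ring
    _ = (Nat.card ↥(H ⊔ K) * (H ⊔ K).index) * (Nat.card ↥(H ⊓ K) * (H ⊓ K).index) := by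
      simp only [card_mul_index]
    _ = (H ⊔ K).index * (H ⊓ K).index * (Nat.card H * Nat.card K) := by rw [hcard]; ring

theorem relIndex_eq_of_index_eq_mul [Finite G] {H K : Subgroup G} (hHK : H ≤ K) {m : ℕ}
    (h : H.index = m * K.index) : H.relIndex K = m :=
  Nat.eq_of_mul_eq_mul_right (Nat.pos_of_ne_zero index_ne_zero_of_finite)
    ((relIndex_mul_index hHK).trans h)

theorem index_le_index_iff_card_le [Finite G] {H K : Subgroup G} :
    H.index ≤ K.index ↔ Nat.card K ≤ Nat.card H :=
  le_iff_le_of_mul_eq_mul (Nat.pos_of_ne_zero index_ne_zero_of_finite) Nat.card_pos <| by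
    rw [mul_comm, card_mul_index, mul_comm, card_mul_index]

theorem exists_centralizer_eq_self_of_le [Finite G] {E : Subgroup G}
    (hE : E ≤ centralizer (E : Set G)) :
    ∃ D : Subgroup G, centralizer (D : Set G) = D ∧ E ≤ D := by
  obtain ⟨D, hED, hD⟩ :=
    Finite.exists_le_maximal (p := fun D : Subgroup G => D ≤ centralizer (D : Set G)) hE
  refine ⟨D, le_antisymm (fun x hx => ?_) hD.prop, hED⟩
  have hDx := hD.le_of_ge (sup_zpowers_le_centralizer hD.prop hx) le_sup_left
  exact hDx (mem_sup_right (mem_zpowers x))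

theorem exists_index_eq_pow_of_center_le {p : ℕ} (hp : p.Prime) {n : ℕ}
    (hZ : (center G).index = p ^ n) {H : Subgroup G} (hH : center G ≤ H) :
    ∃ k ≤ n, H.index = p ^ k :=
  (Nat.dvd_prime_pow hp).mp (hZ ▸ index_dvd_of_le hH)

theorem le_centralizer_self_of_index_center_eq [Finite G] {p : ℕ} (hp : p.Prime) {B : Subgroup G}
    (hZB : center G ≤ B) (h : (center G).index = p * B.index) :
    B ≤ centralizer (B : Set G) :=
  le_centralizer_self_of_relIndex_prime hZB (center_le_centralizer _)
    (by rwa [relIndex_eq_of_index_eq_mul hZB h])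

theorem index_centralizer_eq_of_le_centralizer {p : ℕ} (hp : 0 < p) {a b : ℕ} {X S : Subgroup G}
    (hkey : p ^ (a + b) ≤ X.index * (centralizer (X : Set G)).index) (hX : X.index = p ^ b)
    (hS : S ≤ centralizer (X : Set G)) (hSi : S.index = p ^ a) :
    (centralizer (X : Set G)).index = p ^ a := by
  refine le_antisymm (Nat.le_of_dvd (pow_pos hp a) (hSi ▸ index_dvd_of_le hS)) ?_
  rw [hX, pow_add, mul_comm] at hkey
  exact Nat.le_of_mul_le_mul_left hkey (pow_pos hp b)

theorem cdMeasure_mul_index_mul_index (H : Subgroup G) :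
    cdMeasure G H * (H.index * (centralizer (H : Set G)).index) = Nat.card G ^ 2 := by
  rw [cdMeasure, mul_mul_mul_comm, card_mul_index, card_mul_index, sq]

theorem cdMeasure_le_cdMeasure_iff [Finite G] {H K : Subgroup G} :
    cdMeasure G H ≤ cdMeasure G K ↔
      K.index * (centralizer (K : Set G)).index ≤ H.index * (centralizer (H : Set G)).index :=
  le_iff_le_of_mul_eq_mul (Nat.mul_pos Nat.card_pos Nat.card_pos)
    (Nat.pos_of_ne_zero (mul_ne_zero index_ne_zero_of_finite index_ne_zero_of_finite))
    ((cdMeasure_mul_index_mul_index H).trans (cdMeasure_mul_index_mul_index K).symm)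

theorem mem_CD_iff_index_mul_index_eq [Finite G]
    (hmin : ∀ K : Subgroup G, (center G).index ≤ K.index * (centralizer (K : Set G)).index)
    {H : Subgroup G} :
    H ∈ CD G ↔ H.index * (centralizer (H : Set G)).index = (center G).index := by
  have hZ : (center G).index * (centralizer (center G : Set G)).index = (center G).index := by
    rw [centralizer_center, index_top, mul_one]
  simp only [CD, Set.mem_ofPred_eq, cdMeasure_le_cdMeasure_iff]
  exact ⟨fun h => le_antisymm (hZ ▸ h (center G)) (hmin H), fun h K => h ▸ hmin K⟩

theorem eq_of_mem_CD_of_le [Finite G] {H H' : Subgroup G} (hH : H ∈ CD G) (hle : H ≤ H')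
    (hc : centralizer (H' : Set G) = centralizer (H : Set G)) : H = H' := by
  have h := hH H'
  rw [cdMeasure, cdMeasure, hc] at h
  exact eq_of_le_of_card_ge hle (Nat.le_of_mul_le_mul_right h Nat.card_pos)

theorem center_le_of_mem_CD [Finite G] {H : Subgroup G} (hH : H ∈ CD G) : center G ≤ H :=
  (eq_of_mem_CD_of_le hH le_sup_left (centralizer_sup_center H)).ge.trans' le_sup_right

theorem centralizer_centralizer_of_mem_CD [Finite G] {H : Subgroup G} (hH : H ∈ CD G) :
    centralizer (centralizer (H : Set G) : Set G) = H :=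
  (eq_of_mem_CD_of_le hH (le_centralizer_iff.mp le_rfl)
    (centralizer_centralizer_centralizer H)).symm

theorem sup_zpowers_mem_of_relIndex_eq_sq {p : ℕ} (hp : p.Prime) {N T : Subgroup G}
    (hNT : N ≤ T) (hN : N ≤ centralizer (T : Set G)) (hT : ¬ T ≤ centralizer (T : Set G))
    (hidx : N.relIndex T = p ^ 2) {x : G} (hxT : x ∈ T) (hxN : x ∉ N) :
    N ≤ N ⊔ zpowers x ∧ N ⊔ zpowers x ≤ T ∧ N.relIndex (N ⊔ zpowers x) = p := by
  set M := N ⊔ zpowers x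
  have hMT : M ≤ T := sup_le hNT (zpowers_le.mpr hxT)
  have hM : M ≤ centralizer (M : Set G) :=
    sup_zpowers_le_centralizer (hN.trans (centralizer_le hNT)) (le_centralizer_iff.mp hN hxT)
  refine ⟨le_sup_left, hMT, eq_prime_of_mul_eq_sq (b := M.relIndex T) hp ?_ ?_ ?_⟩
  · rw [relIndex_mul_relIndex N M T le_sup_left hMT, hidx]
  · exact fun h => hxN (relIndex_eq_one.mp h (mem_sup_right (mem_zpowers x)))
  · intro h
    exact hT (le_antisymm hMT (relIndex_eq_one.mp h) ▸ hM)

theorem add_one_le_ncard_of_relIndex_eq_sq [Finite G] {p : ℕ} (hp : p.Prime) {N T : Subgroup G}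
    (hNT : N ≤ T) (hN : N ≤ centralizer (T : Set G)) (hT : ¬ T ≤ centralizer (T : Set G))
    (hidx : N.relIndex T = p ^ 2) :
    p + 1 ≤ {B : Subgroup G | N ≤ B ∧ B ≤ T ∧ N.relIndex B = p}.ncard := by
  set S := {B : Subgroup G | N ≤ B ∧ B ≤ T ∧ N.relIndex B = p}
  have hcard {B : Subgroup G} (hNB : N ≤ B) : Nat.card B = Nat.card N * N.relIndex B := by
    rw [← relIndex_bot_left, ← relIndex_bot_left, relIndex_mul_relIndex _ _ _ bot_le hNB]
  set n := Nat.card N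
  have hdiff {B : Subgroup G} (hNB : N ≤ B) :
      ((B : Set G) \ N).ncard = n * N.relIndex B - n := by
    rw [Set.ncard_sdiff hNB, ← Nat.card_coe_set_eq, ← Nat.card_coe_set_eq]
    exact congrArg (· - n) (hcard hNB)
  have hcover : (T : Set G) \ N ⊆ ⋃ B ∈ S.toFinite.toFinset, (B : Set G) \ N :=
    fun x hx => Set.mem_biUnion (S.toFinite.mem_toFinset.mpr
      (sup_zpowers_mem_of_relIndex_eq_sq hp hNT hN hT hidx hx.1 hx.2))
      ⟨mem_sup_right (mem_zpowers x), hx.2⟩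
  have hbound := ((Set.ncard_le_ncard hcover).trans (Finset.set_ncard_biUnion_le _ _)).trans
    (Finset.sum_le_card_nsmul _ _ (n * p - n) fun B hB => by
      obtain ⟨hNB, -, hB⟩ := S.toFinite.mem_toFinset.mp hB
      rw [hdiff hNB, hB])
  rw [hdiff hNT, hidx, smul_eq_mul, ← Set.ncard_eq_toFinset_card] at hbound
  obtain ⟨q, rfl⟩ : ∃ q, p = q + 1 := ⟨p - 1, (Nat.sub_add_cancel hp.one_le).symm⟩
  have hq : 0 < n * q := Nat.mul_pos Nat.card_pos (Nat.succ_le_succ_iff.mp hp.two_le)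
  have e1 : n * (q + 1) - n = n * q := by rw [mul_add_one, Nat.add_sub_cancel]
  have e2 : n * (q + 1) ^ 2 - n = (q + 2) * (n * q) := by
    rw [Nat.sub_eq_iff_eq_add (Nat.le_mul_of_pos_right _ (by positivity))]; ring
  rw [e1, e2] at hbound
  exact Nat.le_of_mul_le_mul_right hbound hq

theorem index_le_index_of_le_centralizer [Finite G] {A : Subgroup G}
    (hAmax : ∀ B : Subgroup G, centralizer (B : Set G) = B → Nat.card B ≤ Nat.card A)
    {E : Subgroup G} (hE : E ≤ centralizer (E : Set G)) :
    A.index ≤ E.index :=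
  let ⟨D, hD, hED⟩ := exists_centralizer_eq_self_of_le hE
  index_le_index_iff_card_le.mpr ((card_le_of_le hED).trans (hAmax D hD))

theorem centralizer_eq_self_of_index_eq [Finite G] {A : Subgroup G}
    (hAmax : ∀ B : Subgroup G, centralizer (B : Set G) = B → Nat.card B ≤ Nat.card A)
    {E : Subgroup G} (hE : E ≤ centralizer (E : Set G)) (h : E.index = A.index) :
    centralizer (E : Set G) = E := by
  obtain ⟨D, hD, hED⟩ := exists_centralizer_eq_self_of_le hE
  obtain rfl : E = D :=
    eq_of_le_of_card_ge hED ((hAmax D hD).trans (index_le_index_iff_card_le.mp h.le))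
  exact hD

theorem pow_four_le_index_mul_index_of_center_le [Finite G] {p : ℕ} (hp : p.Prime)
    {A : Subgroup G}
    (hAmax : ∀ B : Subgroup G, centralizer (B : Set G) = B → Nat.card B ≤ Nat.card A)
    (hiA : A.index = p ^ 2) (hZ : (center G).index = p ^ 4) {H : Subgroup G}
    (hZH : center G ≤ H) : p ^ 4 ≤ H.index * (centralizer (H : Set G)).index := by
  set K := centralizer (H : Set G)
  have hHE : H ≤ centralizer ((H ⊓ K : Subgroup G) : Set G) := le_centralizer_iff.mp inf_le_right
  have hKE : K ≤ centralizer ((H ⊓ K : Subgroup G) : Set G) :=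
    centralizer_le (SetLike.coe_subset_coe.mpr inf_le_left)
  have hE : H ⊓ K ≤ centralizer ((H ⊓ K : Subgroup G) : Set G) := inf_le_right.trans hKE
  have hZE : center G ≤ H ⊓ K := le_inf hZH (center_le_centralizer _)
  obtain ⟨j, hj4, hj⟩ := exists_index_eq_pow_of_center_le hp hZ hZE
  have hj2 : 2 ≤ j := (Nat.pow_le_pow_iff_right hp.one_lt).mp
    (hiA ▸ hj ▸ index_le_index_of_le_centralizer hAmax hE)
  interval_cases j
  · have hc := centralizer_eq_self_of_index_eq hAmax hE (hj.trans hiA.symm)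
    have hH : H = H ⊓ K := le_antisymm (hc ▸ hHE) inf_le_left
    have hK : K = H ⊓ K := le_antisymm (hc ▸ hKE) inf_le_right
    have hHi : H.index = p ^ 2 := by rw [hH]; exact hj
    have hKi : K.index = p ^ 2 := by rw [hK]; exact hj
    rw [hHi, hKi, ← pow_add]
  · have hS : H ⊔ K ≠ ⊤ := by
      intro hS
      have htop : centralizer ((H ⊓ K : Subgroup G) : Set G) = ⊤ :=
        top_le_iff.mp (hS ▸ sup_le hHE hKE)
      have hEZ : H ⊓ K = center G := le_antisymm (centralizer_eq_top_iff_subset.mp htop) hZE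
      rw [hEZ, hZ] at hj
      exact absurd (Nat.pow_right_injective hp.two_le hj) (by norm_num)
    obtain ⟨m, -, hm⟩ := exists_index_eq_pow_of_center_le hp hZ (hZH.trans le_sup_left)
    have hm0 : m ≠ 0 := by
      rintro rfl
      exact hS (index_eq_one.mp (by rw [hm, pow_zero]))
    rw [index_mul_index_eq_index_sup_mul_index_inf le_rfl, hm, hj, ← pow_add]
    exact Nat.pow_le_pow_right hp.pos (by omega)
  · exact hj.ge.trans index_inf_le

theorem pow_four_le_index_mul_index [Finite G] {p : ℕ} (hp : p.Prime) {A : Subgroup G}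
    (hAmax : ∀ B : Subgroup G, centralizer (B : Set G) = B → Nat.card B ≤ Nat.card A)
    (hiA : A.index = p ^ 2) (hZ : (center G).index = p ^ 4) (H : Subgroup G) :
    p ^ 4 ≤ H.index * (centralizer (H : Set G)).index :=
  calc p ^ 4 ≤ (H ⊔ center G).index * (centralizer ((H ⊔ center G : Subgroup G) : Set G)).index :=
        pow_four_le_index_mul_index_of_center_le hp hAmax hiA hZ le_sup_right
    _ ≤ H.index * (centralizer (H : Set G)).index := by
        rw [centralizer_sup_center]
        exact Nat.mul_le_mul_right _ (index_antitone le_sup_left)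

theorem mem_CD_cases [Finite G] {p : ℕ} (hp : p.Prime) (hZ : (center G).index = p ^ 4)
    {H : Subgroup G} (hH : H ∈ CD G) (hprod : H.index * (centralizer (H : Set G)).index = p ^ 4) :
    H = center G ∨ H = ⊤ ∨ (H.index = p ^ 2 ∧ (centralizer (H : Set G)).index = p ^ 2) ∨
      (H.index = p ∧ (centerIn H).index = p ^ 3) ∨
      ∃ T : Subgroup G, T.index = p ∧ (centerIn T).index = p ^ 3 ∧ H = centerIn T := by
  have hZH := center_le_of_mem_CD hH
  have hcc := centralizer_centralizer_of_mem_CD hH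
  obtain ⟨k, hk, hHk⟩ := exists_index_eq_pow_of_center_le hp hZ hZH
  have hC : (centralizer (H : Set G)).index = p ^ (4 - k) :=
    Nat.eq_of_mul_eq_mul_left (pow_pos hp.pos k) <| by
      rw [← pow_add, Nat.add_sub_cancel' hk, ← hHk, hprod]
  interval_cases k
  · exact .inr <| .inl <| index_eq_one.mp hHk
  · have hCab := le_centralizer_self_of_index_center_eq hp (center_le_centralizer _)
      (by rw [hZ, hC]; ring)
    rw [hcc] at hCab
    rw [pow_one] at hHk
    refine .inr <| .inr <| .inr <| .inl ⟨hHk, ?_⟩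
    rw [centerIn_eq_inf_centralizer, inf_eq_right.mpr hCab, hC]
  · exact .inr <| .inr <| .inl ⟨hHk, hC⟩
  · have hHab := le_centralizer_self_of_index_center_eq hp hZH (by rw [hZ, hHk]; ring)
    refine .inr <| .inr <| .inr <| .inr ⟨centralizer (H : Set G), by rw [hC, pow_one], ?_, ?_⟩
    all_goals rw [centerIn_eq_inf_centralizer, hcc, inf_eq_right.mpr hHab]
    exact hHk
  · exact .inl (eq_of_le_of_card_ge hZH (index_le_index_iff_card_le.mp (hHk.trans hZ.symm).ge)).symm

theorem index_mul_index_eq_of_cases [Finite G] {p : ℕ} (hp : p.Prime)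
    (hZ : (center G).index = p ^ 4)
    (hkey : ∀ H : Subgroup G, p ^ 4 ≤ H.index * (centralizer (H : Set G)).index) {H : Subgroup G}
    (h : H = center G ∨ H = ⊤ ∨ (H.index = p ^ 2 ∧ (centralizer (H : Set G)).index = p ^ 2) ∨
      (H.index = p ∧ (centerIn H).index = p ^ 3) ∨
      ∃ T : Subgroup G, T.index = p ∧ (centerIn T).index = p ^ 3 ∧ H = centerIn T) :
    H.index * (centralizer (H : Set G)).index = p ^ 4 := by
  rcases h with rfl | rfl | ⟨hB, hCB⟩ | ⟨hT, hZT⟩ | ⟨T, hT, hZT, rfl⟩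
  · rw [centralizer_center, index_top, hZ, mul_one]
  · rw [index_top, coe_top, centralizer_univ, hZ, one_mul]
  · rw [hB, hCB, ← pow_add]
  · rw [hT, index_centralizer_eq_of_le_centralizer (a := 3) (b := 1) hp.pos (hkey H)
      (hT.trans (pow_one p).symm) (centerIn_le_centralizer H) hZT, ← pow_succ']
  · rw [hZT, index_centralizer_eq_of_le_centralizer (a := 1) (b := 3) hp.pos (hkey _) hZT
      (le_centralizer_iff.mp (centerIn_le_centralizer T)) (hT.trans (pow_one p).symm), ← pow_add]

theorem add_one_le_ncard_of_index_centerIn [Finite G] {p : ℕ} (hp : p.Prime)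
    (hkey : ∀ H : Subgroup G, p ^ 4 ≤ H.index * (centralizer (H : Set G)).index)
    {T : Subgroup G} (hT : T.index = p) (hZT : (centerIn T).index = p ^ 3) :
    p + 1 ≤ {B : Subgroup G | B.index = p ^ 2 ∧
      (centralizer (B : Set G)).index = p ^ 2}.ncard := by
  have hNT := centerIn_le T
  have hN := centerIn_le_centralizer T
  have hTab : ¬ T ≤ centralizer (T : Set G) := fun h => by
    rw [centerIn_eq_inf_centralizer, inf_eq_left.mpr h, hT] at hZT
    exact absurd (Nat.pow_right_injective hp.two_le ((pow_one p).trans hZT)) (by norm_num)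
  have hidx : (centerIn T).relIndex T = p ^ 2 :=
    relIndex_eq_of_index_eq_mul hNT (by rw [hZT, hT, pow_succ])
  refine (add_one_le_ncard_of_relIndex_eq_sq hp hNT hN hTab hidx).trans
    (Set.ncard_le_ncard ?_ (Set.toFinite _))
  rintro B ⟨hNB, hBT, hB⟩
  have hBi : B.index = p ^ 2 := Nat.eq_of_mul_eq_mul_left hp.pos <| by
    rw [← hB, relIndex_mul_index hNB, hZT, hB, pow_succ']
  have hBab := le_centralizer_self_of_relIndex_prime hNB (hN.trans (centralizer_le hBT)) (hB ▸ hp)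
  exact ⟨hBi, index_centralizer_eq_of_le_centralizer hp.pos (hkey B) hBi hBab hBi⟩

end

theorem stmt_5_general (G : Type*) [Group G] [Finite G] (p : ℕ) (hp : p.Prime)
    (A : Subgroup G)
    (hAmax : ∀ B : Subgroup G, Subgroup.centralizer (B : Set G) = B →
      Nat.card B ≤ Nat.card A)
    (hiA : A.index = p ^ 2) (hZ : (Subgroup.center G).index = p ^ 4) :
    CD G = {Subgroup.center G, ⊤} ∪
      {B : Subgroup G | B.index = p ^ 2 ∧
        (Subgroup.centralizer (B : Set G)).index = p ^ 2} ∪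
      {T : Subgroup G | T.index = p ∧ (centerIn T).index = p ^ 3} ∪
      {Z : Subgroup G | ∃ T : Subgroup G, T.index = p ∧
        (centerIn T).index = p ^ 3 ∧ Z = centerIn T} ∧
    ((∃ T : Subgroup G, T.index = p ∧ (centerIn T).index = p ^ 3) →
      p + 1 ≤ {B : Subgroup G | B.index = p ^ 2 ∧
        (Subgroup.centralizer (B : Set G)).index = p ^ 2}.ncard) := by
  have hkey := pow_four_le_index_mul_index hp hAmax hiA hZ
  have hCD (H : Subgroup G) : H ∈ CD G ↔ H.index * (centralizer (H : Set G)).index = p ^ 4 :=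
    hZ ▸ mem_CD_iff_index_mul_index_eq (hZ ▸ hkey)
  refine ⟨Set.ext fun H => ?_,
    fun ⟨T, hT, hZT⟩ => add_one_le_ncard_of_index_centerIn hp hkey hT hZT⟩
  simp only [Set.mem_union, Set.mem_insert_iff, Set.mem_singleton_iff, Set.mem_ofPred_eq]
  constructor
  · intro hH
    have := mem_CD_cases hp hZ hH ((hCD H).mp hH)
    tauto
  · intro h
    exact (hCD H).mpr (index_mul_index_eq_of_cases hp hZ hkey (by tauto))

theorem stmt_5 (G : Type*) [Group G] [Finite G] (p : ℕ) (hp : p.Prime)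
    (A : Subgroup G) (hA : Subgroup.centralizer (A : Set G) = A)
    (hAmax : ∀ B : Subgroup G, Subgroup.centralizer (B : Set G) = B →
      Nat.card B ≤ Nat.card A)
    (hiA : A.index = p ^ 2) (hZ : (Subgroup.center G).index = p ^ 4) :
    CD G = {Subgroup.center G, ⊤} ∪
      {B : Subgroup G | B.index = p ^ 2 ∧
        (Subgroup.centralizer (B : Set G)).index = p ^ 2} ∪
      {T : Subgroup G | T.index = p ∧ (centerIn T).index = p ^ 3} ∪
      {Z : Subgroup G | ∃ T : Subgroup G, T.index = p ∧
        (centerIn T).index = p ^ 3 ∧ Z = centerIn T} ∧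
    ((∃ T : Subgroup G, T.index = p ∧ (centerIn T).index = p ^ 3) →
      p + 1 ≤ {B : Subgroup G | B.index = p ^ 2 ∧
        (Subgroup.centralizer (B : Set G)).index = p ^ 2}.ncard) :=
  stmt_5_general G p hp A hAmax hiA hZ
end

section
/- Let G be a finite group, p a prime, and let A be a subgroup of maximum order among the self-centralizing subgroups of G. If |G : A| = p and |G : Z(G)| = p^i with i > 2, then A is the unique self-centralizing subgroup of G of maximum order; that is, every self-centralizing subgroup B of G with |B| = |A| satisfies B = A. -/
theorem stmt_8 (G : Type*) [Group G] [Finite G] (p : ℕ) (hp : p.Prime)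
    (A : Subgroup G) (hA : Subgroup.centralizer (A : Set G) = A)
    (hAmax : ∀ B : Subgroup G, Subgroup.centralizer (B : Set G) = B →
      Nat.card B ≤ Nat.card A)
    (hiA : A.index = p) (i : ℕ) (hi : 2 < i)
    (hZ : (Subgroup.center G).index = p ^ i) :
    ∀ B : Subgroup G, Subgroup.centralizer (B : Set G) = B →
      Nat.card B = Nat.card A → B = A := by
  intro B hB hcard
  by_contra hne
  -- B has index p as well
  have hcardA : 0 < Nat.card A := Nat.card_pos
  have hiB : B.index = p := by
    have h1 := Subgroup.card_mul_index A
    have h2 := Subgroup.card_mul_index B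
    rw [hcard] at h2
    rw [hiA] at h1
    exact Nat.eq_of_mul_eq_mul_left hcardA (h2.trans h1.symm)
  -- A ⊔ B = ⊤
  have hsup : A ⊔ B = ⊤ := by
    have hle : A ≤ A ⊔ B := le_sup_left
    have hdvd : (A ⊔ B).index ∣ A.index := Subgroup.index_dvd_of_le hle
    rw [hiA] at hdvd
    rcases (Nat.Prime.eq_one_or_self_of_dvd hp _ hdvd) with h | h
    · exact Subgroup.index_eq_one.mp h
    · -- then card (A ⊔ B) = card A, so A = A ⊔ B, so B ≤ A, so B = A
      exfalso
      have hc : Nat.card (A ⊔ B : Subgroup G) = Nat.card A := by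
        have h1 := Subgroup.card_mul_index A
        have h2 := Subgroup.card_mul_index (A ⊔ B)
        rw [h] at h2
        rw [hiA] at h1
        have hpos : 0 < p := hp.pos
        have : Nat.card (A ⊔ B : Subgroup G) * p = Nat.card A * p := by omega
        exact Nat.eq_of_mul_eq_mul_right hpos this
      have hAB : A = A ⊔ B := Subgroup.eq_of_le_of_card_ge hle (by omega)
      have hBA : B ≤ A := hAB ▸ le_sup_right
      exact hne (Subgroup.eq_of_le_of_card_ge hBA (by omega))
  -- A ⊓ B ≤ center
  have hZle : A ⊓ B ≤ Subgroup.center G := by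
    intro d hd
    obtain ⟨hdA, hdB⟩ := hd
    rw [Subgroup.mem_center_iff]
    intro g
    have hg : g ∈ Subgroup.centralizer {d} := by
      have hAc : A ≤ Subgroup.centralizer {d} := by
        intro a ha
        have hdc : d ∈ Subgroup.centralizer (A : Set G) := hA.symm ▸ hdA
        rw [Subgroup.mem_centralizer_iff]
        rintro x rfl
        exact (Subgroup.mem_centralizer_iff.mp hdc a ha).symm
      have hBc : B ≤ Subgroup.centralizer {d} := by
        intro b hb
        have hdc : d ∈ Subgroup.centralizer (B : Set G) := hB.symm ▸ hdB
        rw [Subgroup.mem_centralizer_iff]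
        rintro x rfl
        exact (Subgroup.mem_centralizer_iff.mp hdc b hb).symm
      have : A ⊔ B ≤ Subgroup.centralizer {d} := sup_le hAc hBc
      rw [hsup] at this
      exact this (Subgroup.mem_top g)
    exact (Subgroup.mem_centralizer_iff.mp hg d rfl).symm
  -- index bounds
  have hdvdZ : (Subgroup.center G).index ∣ (A ⊓ B).index :=
    Subgroup.index_dvd_of_le hZle
  have hinf : (A ⊓ B).index ≤ p * p := by
    calc (A ⊓ B).index ≤ A.index * B.index := Subgroup.index_inf_le
    _ = p * p := by rw [hiA, hiB]
  have hne0 : (A ⊓ B).index ≠ 0 := Subgroup.index_ne_zero_of_finite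
  rw [hZ] at hdvdZ
  have hle' : p ^ i ≤ (A ⊓ B).index := Nat.le_of_dvd (Nat.pos_of_ne_zero hne0) hdvdZ
  have : p ^ 3 ≤ p ^ i := Nat.pow_le_pow_right hp.pos (by omega)
  have hpp : p * p < p ^ 3 := by
    have := hp.two_le
    ring_nf
    calc p ^ 2 < p ^ 2 * 2 := by nlinarith
    _ ≤ p ^ 2 * p := by nlinarith
    _ = p ^ 3 := by ring
  omega
end

section
/- Let G be a finite group, p a prime, and let A be a subgroup of maximum order among the self-centralizing subgroups of G. Suppose |G : A| = p^2 and |G : Z(G)| = p^i with i > 4. If G possesses a subgroup T with |G : T| = p and |G : Z(T)| = p^3, then T is unique; that is, any subgroup T' of G with |G : T'| = p and |G : Z(T')| = p^3 satisfies T' = T. -/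
namespace Subgroup

variable {G : Type*} [Group G]

theorem centralizer_sup (H K : Subgroup G) :
    centralizer ((H ⊔ K : Subgroup G) : Set G) = centralizer H ⊓ centralizer K := by
  ext x
  rw [sup_eq_closure, centralizer_closure]
  simp only [mem_inf, mem_centralizer_iff, Set.mem_union, or_imp, forall_and]

theorem le_center_of_sup_eq_top {H K W : Subgroup G} (hHK : H ⊔ K = ⊤)
    (hH : W ≤ centralizer H) (hK : W ≤ centralizer K) : W ≤ center G := by
  rw [← centralizer_univ, ← coe_top, ← hHK, centralizer_sup]
  exact le_inf hH hK

theorem centerIn_eq_inf_centralizer (T : Subgroup G) : centerIn T = T ⊓ centralizer T := by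
  ext x
  constructor
  · rintro ⟨y, hy, rfl⟩
    exact ⟨y.2, fun t ht => congrArg Subtype.val (mem_center_iff.1 hy ⟨t, ht⟩)⟩
  · rintro ⟨hxT, hx⟩
    exact ⟨⟨x, hxT⟩, mem_center_iff.2 fun t => Subtype.ext (hx t t.2), rfl⟩

theorem centerIn_le (T : Subgroup G) : centerIn T ≤ T :=
  (centerIn_eq_inf_centralizer T).le.trans inf_le_left

theorem centerIn_le_centralizer (T : Subgroup G) : centerIn T ≤ centralizer T :=
  (centerIn_eq_inf_centralizer T).le.trans inf_le_right

theorem eq_of_le_of_index_eq {H K : Subgroup G} (hHK : H ≤ K) (hindex : H.index = K.index)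
    (hK : K.index ≠ 0) : H = K := by
  have hrel := relIndex_mul_index hHK
  rw [hindex, Nat.mul_eq_right hK] at hrel
  exact le_antisymm hHK (relIndex_eq_one.1 hrel)

theorem not_le_of_index_eq_of_ne {H K : Subgroup G} (hindex : H.index = K.index)
    (hK : K.index ≠ 0) (hne : H ≠ K) : ¬H ≤ K :=
  fun hHK => hne (eq_of_le_of_index_eq hHK hindex hK)

theorem sup_eq_top_of_index_prime {p : ℕ} (hp : p.Prime) {H K : Subgroup G} (hH : H.index = p)
    (hK : ¬K ≤ H) : H ⊔ K = ⊤ := by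
  have hdvd : (H ⊔ K).index ∣ p := hH ▸ index_dvd_of_le le_sup_left
  rcases hp.eq_one_or_self_of_dvd _ hdvd with h | h
  · exact index_eq_one.1 h
  · have hsup := eq_of_le_of_index_eq le_sup_left (hH.trans h.symm) (h ▸ hp.ne_zero)
    exact absurd (hsup ▸ le_sup_right) hK

theorem index_inf_mul_index_le {Z Z' D : Subgroup G} [Z'.FiniteIndex] (hZ : Z ≤ D)
    (hZ' : Z' ≤ D) : (Z ⊓ Z').index * D.index ≤ Z.index * Z'.index := by
  have hZZ' : (Z ⊓ Z').index = Z'.relIndex Z * Z.index := by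
    rw [← relIndex_mul_index (inf_le_left : Z ⊓ Z' ≤ Z), inf_comm, inf_relIndex_right]
  have hrel : Z'.relIndex Z ≤ Z'.relIndex D :=
    relIndex_le_of_le_right hZ (mt index_eq_zero_of_relIndex_eq_zero FiniteIndex.index_ne_zero)
  calc (Z ⊓ Z').index * D.index = Z'.relIndex Z * D.index * Z.index := by rw [hZZ']; ring
    _ ≤ Z'.relIndex D * D.index * Z.index := by gcongr
    _ = Z.index * Z'.index := by rw [relIndex_mul_index hZ']; ring

theorem index_center_le_of_not_centerIn_le [Finite G] {p : ℕ} (hp : p.Prime)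
    {T T' : Subgroup G} (hT' : T'.index = p) (hZT : ¬centerIn T ≤ T') :
    (center G).index ≤ (centerIn T').index * T.index := by
  have hcentral : centerIn T' ⊓ T ≤ center G := by
    refine le_center_of_sup_eq_top (sup_eq_top_of_index_prime hp hT' hZT)
      (inf_le_left.trans (centerIn_le_centralizer T')) ?_
    rw [le_centralizer_iff]
    exact (centerIn_le_centralizer T).trans (centralizer_le inf_le_right)
  exact (index_antitone hcentral).trans index_inf_le

theorem index_center_mul_index_inf_le [Finite G] {T T' : Subgroup G} (hTT' : T ⊔ T' = ⊤)
    (hZT : centerIn T ≤ T') (hZT' : centerIn T' ≤ T) :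
    (center G).index * (T ⊓ T').index ≤ (centerIn T).index * (centerIn T').index := by
  have hcentral : centerIn T ⊓ centerIn T' ≤ center G :=
    le_center_of_sup_eq_top hTT' (inf_le_left.trans (centerIn_le_centralizer T))
      (inf_le_right.trans (centerIn_le_centralizer T'))
  calc (center G).index * (T ⊓ T').index
      ≤ (centerIn T ⊓ centerIn T').index * (T ⊓ T').index :=
        Nat.mul_le_mul_right _ (index_antitone hcentral)
    _ ≤ (centerIn T).index * (centerIn T').index :=
      index_inf_mul_index_le (le_inf (centerIn_le T) hZT) (le_inf hZT' (centerIn_le T'))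

end Subgroup

theorem stmt_9_general (G : Type*) [Group G] [Finite G] (p : ℕ) (hp : p.Prime)
    (i : ℕ) (hi : 4 < i)
    (hZ : (Subgroup.center G).index = p ^ i)
    (T : Subgroup G) (hiT : T.index = p) (hZT : (centerIn T).index = p ^ 3) :
    ∀ T' : Subgroup G, T'.index = p → (centerIn T').index = p ^ 3 → T' = T := by
  intro T' hiT' hZT'
  by_contra hne
  have hTT' : ¬T ≤ T' :=
    Subgroup.not_le_of_index_eq_of_ne (hiT.trans hiT'.symm) (hiT' ▸ hp.ne_zero) (Ne.symm hne)
  have hT'T : ¬T' ≤ T :=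
    Subgroup.not_le_of_index_eq_of_ne (hiT'.trans hiT.symm) (hiT ▸ hp.ne_zero) hne
  have hp5 : p ^ 5 ≤ p ^ i := Nat.pow_le_pow_right hp.pos hi
  have hp4 : p ^ 3 * p < p ^ 5 := by
    rw [← pow_succ]; exact Nat.pow_lt_pow_right hp.one_lt (by norm_num)
  by_cases hZle : centerIn T ≤ T'
  · by_cases hZ'le : centerIn T' ≤ T
    · have hD : p < (T ⊓ T').index := hiT ▸ Subgroup.index_strictAnti (inf_lt_left.2 hTT')
      have hle := Subgroup.index_center_mul_index_inf_le
        (Subgroup.sup_eq_top_of_index_prime hp hiT hT'T) hZle hZ'le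
      rw [hZ, hZT, hZT'] at hle
      have hp6 : p ^ 5 * p < p ^ 3 * p ^ 3 := calc
        p ^ 5 * p < p ^ 5 * (T ⊓ T').index := Nat.mul_lt_mul_of_pos_left hD (pow_pos hp.pos 5)
        _ ≤ p ^ i * (T ⊓ T').index := Nat.mul_le_mul_right _ hp5
        _ ≤ p ^ 3 * p ^ 3 := hle
      rw [← pow_succ, ← pow_add] at hp6
      exact lt_irrefl _ hp6
    · have hle := Subgroup.index_center_le_of_not_centerIn_le hp hiT hZ'le
      rw [hZ, hZT, hiT'] at hle
      omega
  · have hle := Subgroup.index_center_le_of_not_centerIn_le hp hiT' hZle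
    rw [hZ, hZT', hiT] at hle
    omega

theorem stmt_9 (G : Type*) [Group G] [Finite G] (p : ℕ) (hp : p.Prime)
    (A : Subgroup G) (hA : Subgroup.centralizer (A : Set G) = A)
    (hAmax : ∀ B : Subgroup G, Subgroup.centralizer (B : Set G) = B →
      Nat.card B ≤ Nat.card A)
    (hiA : A.index = p ^ 2) (i : ℕ) (hi : 4 < i)
    (hZ : (Subgroup.center G).index = p ^ i)
    (T : Subgroup G) (hiT : T.index = p) (hZT : (centerIn T).index = p ^ 3) :
    ∀ T' : Subgroup G, T'.index = p → (centerIn T').index = p ^ 3 → T' = T :=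
  stmt_9_general G p hp i hi hZ T hiT hZT
end

section
/- Let G be a finite group with an abelian subgroup A of index 2, and suppose there exists x ∈ G with x ∉ A, x^2 ∈ A, x^2 ≠ 1, and x·a·x⁻¹ = a⁻¹ for all a ∈ A (so G is the generalized dicyclic group Dic(A)). If the subgroup A^2 = {a^2 : a ∈ A} of A has order greater than 2, then CD(G) = {A}. -/
theorem sq_eq_one_of_commute_of_conj_eq_inv {G : Type*} [Group G] {g b : G}
    (hinv : g * b * g⁻¹ = b⁻¹) (hc : Commute g b) : b ^ 2 = 1 := by
  rw [hc.mul_inv_cancel, eq_inv_iff_mul_eq_one] at hinv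
  rw [sq, hinv]

namespace Subgroup

variable {G : Type*} [Group G]

theorem card_le_index_mul_card_inf (A H : Subgroup G) (hA : A.index ≠ 0) :
    Nat.card H ≤ A.index * Nat.card (A ⊓ H : Subgroup G) := by
  have hsplit : Nat.card (A ⊓ H : Subgroup G) * A.relIndex H = Nat.card H := by
    rw [← relIndex_bot_left, ← relIndex_bot_left, ← inf_relIndex_right A H,
      relIndex_mul_relIndex _ _ _ bot_le inf_le_right]
  have hrel : A.relIndex H ≤ A.index := by
    simpa only [relIndex_top_right] using relIndex_le_of_le_right le_top (by simpa using hA)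
  rw [← hsplit, mul_comm]
  exact Nat.mul_le_mul_right _ hrel

theorem conj_eq_inv_of_index_eq_two {A : Subgroup G} [IsMulCommutative A] (hA : A.index = 2)
    {x : G} (hx : x ∉ A) (hinv : ∀ a ∈ A, x * a * x⁻¹ = a⁻¹) :
    ∀ g ∉ A, ∀ b ∈ A, g * b * g⁻¹ = b⁻¹ := by
  intro g hg b hb
  have hgx : g * x⁻¹ ∈ A := by
    rw [mul_mem_iff_of_index_two hA, inv_mem_iff]
    exact iff_of_false hg hx
  calc g * b * g⁻¹ = (g * x⁻¹) * (x * b * x⁻¹) * (g * x⁻¹)⁻¹ := by group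
    _ = b⁻¹ * (g * x⁻¹) * (g * x⁻¹)⁻¹ := by
      rw [hinv b hb, setLike_mul_comm hgx (inv_mem hb)]
    _ = b⁻¹ := by group

open scoped IsMulCommutative in
def twoTorsion (A : Subgroup G) [IsMulCommutative A] : Subgroup G :=
  (powMonoidHom 2 : A →* A).ker.map A.subtype

variable {A : Subgroup G} [IsMulCommutative A]

theorem mem_twoTorsion {g : G} : g ∈ A.twoTorsion ↔ g ∈ A ∧ g ^ 2 = 1 := by
  constructor
  · rintro ⟨a, ha, rfl⟩
    exact ⟨a.2, congrArg Subtype.val ha⟩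
  · rintro ⟨hg, hg2⟩
    exact ⟨⟨g, hg⟩, Subtype.ext hg2, rfl⟩

open scoped IsMulCommutative in
theorem card_eq_card_twoTorsion_mul_ncard_sq :
    Nat.card A = Nat.card A.twoTorsion * {g : G | ∃ a ∈ A, g = a ^ 2}.ncard := by
  have hsq : {g : G | ∃ a ∈ A, g = a ^ 2} =
      Subtype.val '' ((powMonoidHom 2 : A →* A).range : Set A) := by
    ext g
    constructor
    · rintro ⟨a, ha, rfl⟩
      exact ⟨⟨a, ha⟩ ^ 2, ⟨⟨a, ha⟩, rfl⟩, rfl⟩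
    · rintro ⟨_, ⟨a, rfl⟩, rfl⟩
      exact ⟨a, a.2, rfl⟩
  rw [hsq, Set.ncard_image_of_injective _ Subtype.val_injective, ← Nat.card_coe_set_eq,
    twoTorsion, card_map_of_injective A.subtype_injective,
    ← card_mul_index (powMonoidHom 2 : A →* A).ker, index_ker]
  rfl

end Subgroup

section Dicyclic

open Subgroup

variable {G : Type*} [Group G] {A : Subgroup G} [IsMulCommutative A]
  (hconj : ∀ g ∉ A, ∀ b ∈ A, g * b * g⁻¹ = b⁻¹)
include hconj

theorem inf_le_twoTorsion_of_not_le_of_le_centralizer {H K : Subgroup G} (hH : ¬H ≤ A)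
    (hK : K ≤ centralizer H) : A ⊓ K ≤ A.twoTorsion := by
  obtain ⟨g, hgH, hgA⟩ := SetLike.not_le_iff_exists.mp hH
  rintro k ⟨hkA, hkK⟩
  exact mem_twoTorsion.mpr
    ⟨hkA, sq_eq_one_of_commute_of_conj_eq_inv (hconj g hgA k hkA) (hK hkK g hgH)⟩

variable [Finite G] (hA : A.index = 2) (hω : 3 * Nat.card A.twoTorsion ≤ Nat.card A)
include hA hω

theorem card_mul_card_lt_of_not_le_of_le_centralizer {H K : Subgroup G} (hH : ¬H ≤ A)
    (hK : K ≤ centralizer H) : Nat.card H * Nat.card K < Nat.card A * Nat.card A := by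
  have hω_pos : 0 < Nat.card A.twoTorsion := Nat.card_pos
  have hKω : Nat.card (A ⊓ K : Subgroup G) ≤ Nat.card A.twoTorsion :=
    card_le_of_le (inf_le_twoTorsion_of_not_le_of_le_centralizer hconj hH hK)
  have hH2 := card_le_index_mul_card_inf A H (by omega)
  have hK2 := card_le_index_mul_card_inf A K (by omega)
  rw [hA] at hH2 hK2
  by_cases hKA : K ≤ A
  · have hHA : Nat.card (A ⊓ H : Subgroup G) ≤ Nat.card A := card_le_of_le inf_le_left
    rw [inf_eq_right.mpr hKA] at hKω
    nlinarith
  · have hHω : Nat.card (A ⊓ H : Subgroup G) ≤ Nat.card A.twoTorsion :=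
      card_le_of_le (inf_le_twoTorsion_of_not_le_of_le_centralizer hconj hKA
        (le_centralizer_iff.mp hK))
    nlinarith

theorem centralizer_eq_self_of_conj_eq_inv : centralizer (A : Set G) = A := by
  have hAC : A ≤ centralizer A := le_centralizer_iff_isMulCommutative.mpr inferInstance
  refine le_antisymm (not_not.mp fun hCA => ?_) hAC
  have hlt := card_mul_card_lt_of_not_le_of_le_centralizer hconj hA hω hCA
    (le_centralizer_iff.mp le_rfl)
  have hle := card_le_of_le hAC
  nlinarith

theorem cdMeasure_lt_of_conj_eq_inv {H : Subgroup G} (hH : H ≠ A) :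
    cdMeasure G H < cdMeasure G A := by
  have hCA := centralizer_eq_self_of_conj_eq_inv hconj hA hω
  rw [cdMeasure, cdMeasure, hCA]
  by_cases hHA : H ≤ A
  · by_cases hCHA : centralizer (H : Set G) ≤ A
    · have hCH : centralizer (H : Set G) = A :=
        le_antisymm hCHA (le_centralizer_iff.mpr (hHA.trans hCA.ge))
      have hlt : Nat.card H < Nat.card A :=
        (card_le_of_le hHA).lt_of_ne fun h => hH (eq_of_le_of_card_ge hHA h.ge)
      rw [hCH]
      exact Nat.mul_lt_mul_of_pos_right hlt Nat.card_pos
    · rw [mul_comm]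
      exact card_mul_card_lt_of_not_le_of_le_centralizer hconj hA hω hCHA
        (le_centralizer_iff.mp le_rfl)
  · exact card_mul_card_lt_of_not_le_of_le_centralizer hconj hA hω hHA le_rfl

end Dicyclic

theorem CD_eq_singleton_of_cdMeasure_lt {G : Type*} [Group G] {A : Subgroup G}
    (h : ∀ H ≠ A, cdMeasure G H < cdMeasure G A) : CD G = {A} := by
  ext H
  refine ⟨fun hH => by_contra fun hne => (hH A).not_gt (h H hne), ?_⟩
  rintro rfl K
  rcases eq_or_ne K H with rfl | hK
  exacts [le_rfl, (h K hK).le]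

theorem stmt_10_general (G : Type*) [Group G] [Finite G]
    (A : Subgroup G) (hab : IsMulCommutative A) (hiA : A.index = 2)
    (x : G) (hx : x ∉ A)
    (hinv : ∀ a ∈ A, x * a * x⁻¹ = a⁻¹)
    (hsq : 2 < {g : G | ∃ a ∈ A, g = a ^ 2}.ncard) :
    CD G = {A} := by
  have hω : 3 * Nat.card A.twoTorsion ≤ Nat.card A := by
    rw [Subgroup.card_eq_card_twoTorsion_mul_ncard_sq (A := A), mul_comm 3]
    exact Nat.mul_le_mul_left _ hsq
  exact CD_eq_singleton_of_cdMeasure_lt fun H hH => cdMeasure_lt_of_conj_eq_inv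
    (Subgroup.conj_eq_inv_of_index_eq_two hiA hx hinv) hiA hω hH

theorem stmt_10 (G : Type*) [Group G] [Finite G]
    (A : Subgroup G) (hab : IsMulCommutative A) (hiA : A.index = 2)
    (x : G) (hx : x ∉ A) (hx2 : x ^ 2 ∈ A) (hx2' : x ^ 2 ≠ 1)
    (hinv : ∀ a ∈ A, x * a * x⁻¹ = a⁻¹)
    (hsq : 2 < {g : G | ∃ a ∈ A, g = a ^ 2}.ncard) :
    CD G = {A} :=
  stmt_10_general G A hab hiA x hx hinv hsq
end

section
/- Let n ≥ 3 and let Dic_{4n} = ⟨a, x | a^{2n} = 1, x^2 = a^n, x·a·x⁻¹ = a⁻¹⟩ be the dicyclic group of order 4n. Then CD(Dic_{4n}) = {⟨a⟩}, the singleton consisting of the cyclic subgroup generated by a (of order 2n). Moreover, for n = 1, CD(Dic_4) = {Dic_4}. -/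
set_option linter.unusedSectionVars false

open QuaternionGroup Subgroup

namespace CDQ

variable {n : ℕ} [NeZero n]

lemma two_n_ne : NeZero (2 * n) := ⟨by have := NeZero.pos n; omega⟩

lemma zmod_self_add {i : ZMod (2 * n)} (h : i + i = 0) :
    i = 0 ∨ i = (n : ZMod (2 * n)) := by
  haveI := two_n_ne (n := n)
  have hv : ((2 * i.val : ℕ) : ZMod (2 * n)) = 0 := by
    have hi : ((i.val : ℕ) : ZMod (2 * n)) = i := ZMod.natCast_zmod_val i
    push_cast [hi]
    linear_combination h
  rw [ZMod.natCast_eq_zero_iff] at hv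
  obtain ⟨k, hk⟩ := hv
  have hlt : i.val < 2 * n := i.val_lt
  have hn := NeZero.pos n
  have hk' : i.val = n * k := by
    have : 2 * i.val = 2 * (n * k) := by rw [hk]; ring
    omega
  have hklt : k < 2 := by
    by_contra hc
    push_neg at hc
    have : n * 2 ≤ n * k := Nat.mul_le_mul_left n hc
    omega
  have : i.val = 0 ∨ i.val = n := by
    interval_cases k <;> omega
  rcases this with h0 | h1
  · left
    rw [← ZMod.natCast_zmod_val i, h0, Nat.cast_zero]
  · right
    rw [← ZMod.natCast_zmod_val i, h1]

omit [NeZero n] in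
lemma inv_a (i : ZMod (2 * n)) : (a i : QuaternionGroup n)⁻¹ = a (-i) := rfl

omit [NeZero n] in
lemma zpow_a_one (k : ℤ) : (a 1 : QuaternionGroup n) ^ k = a (k : ZMod (2 * n)) := by
  cases k with
  | ofNat m =>
    rw [Int.ofNat_eq_coe, zpow_natCast, a_one_pow]
    norm_cast
  | negSucc m =>
    rw [zpow_negSucc, a_one_pow, inv_a]
    congr 1
    simp [Int.negSucc_eq]

lemma a_mem_zpowers (i : ZMod (2 * n)) :
    a i ∈ Subgroup.zpowers (a 1 : QuaternionGroup n) := by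
  haveI := two_n_ne (n := n)
  refine ⟨(i.val : ℤ), ?_⟩
  show (a 1 : QuaternionGroup n) ^ (i.val : ℤ) = a i
  rw [zpow_a_one]
  congr 1
  push_cast
  exact ZMod.natCast_zmod_val i

lemma mem_zpowers_a_one_iff {g : QuaternionGroup n} :
    g ∈ Subgroup.zpowers (a 1 : QuaternionGroup n) ↔ ∃ i, g = a i := by
  constructor
  · rintro ⟨k, rfl⟩
    exact ⟨_, zpow_a_one k⟩
  · rintro ⟨i, rfl⟩
    exact a_mem_zpowers i

lemma eq_a_of_comm_a_one (hn : 2 ≤ n) {g : QuaternionGroup n}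
    (h : a 1 * g = g * a 1) : ∃ i, g = a i := by
  cases g with
  | a i => exact ⟨i, rfl⟩
  | xa j =>
    exfalso
    rw [a_mul_xa, xa_mul_a] at h
    injection h with h'
    have h2 : (1 : ZMod (2 * n)) + 1 = 0 := by linear_combination -h'
    haveI : Fact (1 < 2 * n) := ⟨by omega⟩
    rcases zmod_self_add h2 with h0 | h1
    · exact one_ne_zero h0
    · apply_fun ZMod.val at h1
      rw [ZMod.val_one, ZMod.val_natCast, Nat.mod_eq_of_lt (by omega)] at h1
      omega

lemma mem_zpowers_xa_of_comm {j : ZMod (2 * n)} {g : QuaternionGroup n}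
    (h : xa j * g = g * xa j) : g ∈ Subgroup.zpowers (xa j) := by
  cases g with
  | a i =>
    rw [xa_mul_a, a_mul_xa] at h
    injection h with h'
    have h2 : i + i = 0 := by linear_combination h'
    rcases zmod_self_add h2 with rfl | rfl
    · rw [← one_def]
      exact one_mem _
    · refine Subgroup.mem_zpowers_iff.mpr ⟨(2 : ℤ), ?_⟩
      rw [zpow_two]
      rw [xa_mul_xa]
      congr 1
      ring
  | xa i =>
    rw [xa_mul_xa, xa_mul_xa] at h
    injection h with h'
    have h2 : (i - j) + (i - j) = 0 := by linear_combination h'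
    have hnn : (n : ZMod (2 * n)) = -(n : ZMod (2 * n)) := by
      have h0 : ((2 * n : ℕ) : ZMod (2 * n)) = 0 := ZMod.natCast_self _
      push_cast at h0
      linear_combination h0
    rcases zmod_self_add h2 with hd | hd
    · have hij : i = j := by linear_combination hd
      subst hij
      exact Subgroup.mem_zpowers _
    · have hij : i = j + n := by linear_combination hd
      subst hij
      refine Subgroup.mem_zpowers_iff.mpr ⟨(3 : ℤ), ?_⟩
      have h3 : (xa j : QuaternionGroup n) ^ (3 : ℤ) = (xa j) ^ (3 : ℕ) := by
        norm_cast
      rw [h3, pow_succ, xa_sq, a_mul_xa]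
      congr 1
      rw [sub_eq_add_neg, ← hnn]

lemma card_zpowers_a_one : Nat.card (Subgroup.zpowers (a 1 : QuaternionGroup n)) = 2 * n := by
  rw [Nat.card_zpowers, orderOf_a_one]

lemma card_zpowers_a_n :
    Nat.card (Subgroup.zpowers (a (n : ZMod (2 * n)) : QuaternionGroup n)) = 2 := by
  haveI := two_n_ne (n := n)
  have hn := NeZero.pos n
  rw [Nat.card_zpowers, orderOf_a, ZMod.val_natCast, Nat.mod_eq_of_lt (by omega),
    Nat.gcd_eq_right (dvd_mul_left n 2), Nat.mul_div_cancel _ hn]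

end CDQ


namespace CDQ

open QuaternionGroup Subgroup

lemma a_mem_zpowers_a_n_of_comm {n : ℕ} [NeZero n] {i j : ZMod (2 * n)}
    (h : xa j * a i = a i * xa j) :
    a i ∈ Subgroup.zpowers (a (n : ZMod (2 * n)) : QuaternionGroup n) := by
  rw [xa_mul_a, a_mul_xa] at h
  injection h with h'
  have h2 : i + i = 0 := by linear_combination h'
  rcases zmod_self_add h2 with rfl | rfl
  · rw [← one_def]
    exact one_mem _
  · exact Subgroup.mem_zpowers _

lemma key (n : ℕ) (hn : 3 ≤ n) (K : Subgroup (QuaternionGroup n)) :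
    cdMeasure (QuaternionGroup n) K ≤ 2 * n * (2 * n) ∧
      (cdMeasure (QuaternionGroup n) K = 2 * n * (2 * n) →
        K = Subgroup.zpowers (a (1 : ZMod (2 * n)))) := by
  haveI : NeZero n := ⟨by omega⟩
  haveI := two_n_ne (n := n)
  have cardG : Nat.card (QuaternionGroup n) = 4 * n := by
    rw [Nat.card_eq_fintype_card, card]
  have hlt : 8 * n < 2 * n * (2 * n) := by nlinarith
  by_cases hxa : ∃ j, xa j ∈ K
  · -- K contains some xa j
    obtain ⟨j, hj⟩ := hxa
    have hCle : Subgroup.centralizer (K : Set (QuaternionGroup n))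
        ≤ Subgroup.zpowers (xa j) := fun g hg =>
      mem_zpowers_xa_of_comm (Subgroup.mem_centralizer_iff.mp hg _ hj)
    have hC4 : Nat.card (Subgroup.centralizer (K : Set (QuaternionGroup n))) ≤ 4 := by
      have := Subgroup.card_le_of_le hCle
      rwa [Nat.card_zpowers, orderOf_xa] at this
    have hsmall : cdMeasure (QuaternionGroup n) K ≤ 8 * n := by
      by_cases htop : K = ⊤
      · have hCle2 : Subgroup.centralizer (K : Set (QuaternionGroup n))
            ≤ Subgroup.zpowers (a (n : ZMod (2 * n))) := by
          intro g hg
          have h1 := Subgroup.mem_centralizer_iff.mp hg (a 1) (htop ▸ Subgroup.mem_top _)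
          obtain ⟨i, rfl⟩ := eq_a_of_comm_a_one (by omega) h1
          exact a_mem_zpowers_a_n_of_comm
            (Subgroup.mem_centralizer_iff.mp hg (xa 0) (htop ▸ Subgroup.mem_top _))
        have hC2 : Nat.card (Subgroup.centralizer (K : Set (QuaternionGroup n))) ≤ 2 := by
          have := Subgroup.card_le_of_le hCle2
          rwa [card_zpowers_a_n] at this
        calc cdMeasure (QuaternionGroup n) K
            ≤ (4 * n) * 2 :=
              Nat.mul_le_mul (cardG ▸ Subgroup.card_le_card_group K) hC2
          _ = 8 * n := by ring
      · have hKm : Nat.card K * K.index = 4 * n := by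
          rw [Subgroup.card_mul_index, cardG]
        have hidx : 2 ≤ K.index := by
          have h0 : K.index ≠ 0 := Subgroup.index_ne_zero_of_finite
          have h1 : K.index ≠ 1 := fun h => htop (Subgroup.index_eq_one.mp h)
          omega
        have hKcard : Nat.card K ≤ 2 * n := by
          have := Nat.mul_le_mul_left (Nat.card K) hidx
          omega
        calc cdMeasure (QuaternionGroup n) K
            ≤ (2 * n) * 4 := Nat.mul_le_mul hKcard hC4
          _ = 8 * n := by ring
    exact ⟨hsmall.trans hlt.le, fun h => absurd (h ▸ hsmall) (by omega)⟩
  · -- K ≤ A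
    push_neg at hxa
    have hKA : K ≤ Subgroup.zpowers (a (1 : ZMod (2 * n))) := by
      intro g hg
      cases g with
      | a i => exact a_mem_zpowers i
      | xa j => exact absurd hg (hxa j)
    by_cases hCxa : ∃ j, xa j ∈ Subgroup.centralizer (K : Set (QuaternionGroup n))
    · obtain ⟨j, hj⟩ := hCxa
      have hKn : K ≤ Subgroup.zpowers (a (n : ZMod (2 * n))) := by
        intro g hg
        obtain ⟨i, rfl⟩ := mem_zpowers_a_one_iff.mp (hKA hg)
        exact a_mem_zpowers_a_n_of_comm
          (Subgroup.mem_centralizer_iff.mp hj (a i) hg).symm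
      have hK2 : Nat.card K ≤ 2 := by
        have := Subgroup.card_le_of_le hKn
        rwa [card_zpowers_a_n] at this
      have hsmall : cdMeasure (QuaternionGroup n) K ≤ 8 * n := by
        calc cdMeasure (QuaternionGroup n) K
            ≤ 2 * (4 * n) :=
              Nat.mul_le_mul hK2 (cardG ▸ Subgroup.card_le_card_group _)
          _ = 8 * n := by ring
      exact ⟨hsmall.trans hlt.le, fun h => absurd (h ▸ hsmall) (by omega)⟩
    · push_neg at hCxa
      have hCA : Subgroup.centralizer (K : Set (QuaternionGroup n))
          ≤ Subgroup.zpowers (a (1 : ZMod (2 * n))) := by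
        intro g hg
        cases g with
        | a i => exact a_mem_zpowers i
        | xa j => exact absurd hg (hCxa j)
      have h1 : Nat.card K ≤ 2 * n := by
        have := Subgroup.card_le_of_le hKA
        rwa [card_zpowers_a_one] at this
      have h2 : Nat.card (Subgroup.centralizer (K : Set (QuaternionGroup n))) ≤ 2 * n := by
        have := Subgroup.card_le_of_le hCA
        rwa [card_zpowers_a_one] at this
      refine ⟨Nat.mul_le_mul h1 h2, fun heq => ?_⟩
      have h3 : 2 * n ≤ Nat.card K := by
        by_contra hc
        push_neg at hc
        have hlt2 : Nat.card K * Nat.card (Subgroup.centralizer (K : Set (QuaternionGroup n)))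
            < 2 * n * (2 * n) := by
          calc Nat.card K * Nat.card (Subgroup.centralizer (K : Set (QuaternionGroup n)))
              ≤ Nat.card K * (2 * n) := Nat.mul_le_mul_left _ h2
            _ < 2 * n * (2 * n) := Nat.mul_lt_mul_of_lt_of_le hc le_rfl (by omega)
        exact absurd heq (by unfold cdMeasure at *; omega)
      exact Subgroup.eq_of_le_of_card_ge hKA (by rw [card_zpowers_a_one]; exact h3)

lemma cd_measure_A (n : ℕ) (hn : 3 ≤ n) :
    cdMeasure (QuaternionGroup n) (Subgroup.zpowers (a (1 : ZMod (2 * n))))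
      = 2 * n * (2 * n) := by
  haveI : NeZero n := ⟨by omega⟩
  have hcent : Subgroup.centralizer
      ((Subgroup.zpowers (a (1 : ZMod (2 * n))) : Subgroup (QuaternionGroup n)) :
        Set (QuaternionGroup n))
      = Subgroup.zpowers (a (1 : ZMod (2 * n))) := by
    apply le_antisymm
    · intro g hg
      obtain ⟨i, rfl⟩ := eq_a_of_comm_a_one (n := n) (by omega)
        (Subgroup.mem_centralizer_iff.mp hg (a 1) (Subgroup.mem_zpowers _))
      exact a_mem_zpowers i
    · intro g hg
      rw [Subgroup.mem_centralizer_iff]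
      intro h hh
      obtain ⟨i, rfl⟩ := mem_zpowers_a_one_iff.mp hh
      obtain ⟨k, rfl⟩ := mem_zpowers_a_one_iff.mp hg
      rw [a_mul_a, a_mul_a, add_comm]
  rw [cdMeasure, hcent, card_zpowers_a_one]

end CDQ

theorem stmt_12 (n : ℕ) (hn : 3 ≤ n) :
    CD (QuaternionGroup n) =
      {Subgroup.zpowers (QuaternionGroup.a (1 : ZMod (2 * n)))} ∧
    CD (QuaternionGroup 1) = {(⊤ : Subgroup (QuaternionGroup 1))} := by
  constructor
  · ext K
    simp only [CD, Set.mem_setOf_eq, Set.mem_singleton_iff]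
    constructor
    · intro h
      refine (CDQ.key n hn K).2 (le_antisymm (CDQ.key n hn K).1 ?_)
      have := h (Subgroup.zpowers (QuaternionGroup.a (1 : ZMod (2 * n))))
      rwa [CDQ.cd_measure_A n hn] at this
    · rintro rfl
      intro L
      rw [CDQ.cd_measure_A n hn]
      exact (CDQ.key n hn L).1
  · have hcomm : ∀ g h : QuaternionGroup 1, g * h = h * g := by decide
    have hcent : ∀ K : Subgroup (QuaternionGroup 1),
        Subgroup.centralizer (K : Set (QuaternionGroup 1)) = ⊤ := by
      intro K
      rw [eq_top_iff]
      intro g _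
      rw [Subgroup.mem_centralizer_iff]
      intro h _
      exact hcomm h g
    have cardG : Nat.card (QuaternionGroup 1) = 4 := by
      rw [Nat.card_eq_fintype_card, QuaternionGroup.card]
    have hmeas : ∀ K : Subgroup (QuaternionGroup 1),
        cdMeasure (QuaternionGroup 1) K = Nat.card K * 4 := by
      intro K
      rw [cdMeasure, hcent, Subgroup.card_top, cardG]
    ext K
    simp only [CD, Set.mem_setOf_eq, Set.mem_singleton_iff]
    constructor
    · intro h
      have := h ⊤
      rw [hmeas, hmeas, Subgroup.card_top, cardG] at this
      exact Subgroup.eq_top_of_le_card K (by omega)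
    · rintro rfl
      intro L
      rw [hmeas, hmeas, Subgroup.card_top, cardG]
      have : Nat.card L ≤ 4 := cardG ▸ Subgroup.card_le_card_group L
      omega
end

section
/- Let G be a finite group which can be written as G = AB, where A and B are abelian subgroups of G of relatively prime orders and A is normal in G. Then m*(G) = |A|^2·|C_B(A)|^2 and CD(G) = {A·C_B(A)}, where C_B(A) = B ∩ C_G(A). -/
/-!
Write `C = C_B(A)`. Because `G = AB` with `A ∩ B = 1`, every subgroup satisfies
`|H| = |A ∩ H| · |B ∩ AH|`; applied to `H` and to `C_G(H)` this bounds `m_G(H)` by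
`(|X| · |C_B(X)|) · (|S| · |C_A(S)|)` with `X = A ∩ H ≤ A` and `S = B ∩ AH ≤ B`. Both factors
are at most `|A| · |C|`, with equality only for `X = A` and `S = C`. Equality therefore forces
`H = AC = C_G(A)`, an abelian self-centralizing subgroup, whose measure is `(|A| · |C|)²`.

The two bounds come from the coprime action inequality `|Q| ≤ |N| · |ker φ|` for an abelian
group `Q` acting on an abelian group `N` of coprime order, applied to `C_B(X)` acting on `A / X`
and to `S` acting on `A / C_A(S)`. It goes by induction on `|N|`: if the orbit of some `x ≠ 1`
generates `N`, the stabiliser of `x` is the kernel; otherwise the orbit generates a proper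
invariant subgroup `N₁`, and the kernel of the action on `N₁` acts on `N / N₁` with kernel
`ker φ`, since a coprime automorphism that is trivial on `N₁` and on `N / N₁` is trivial.
-/

open Subgroup

section CoprimeAction

variable {Q N : Type*} [Group Q] [Group N]

def restrictMulAut (φ : Q →* MulAut N) (N₁ : Subgroup N) (hN₁ : ∀ q, ∀ a ∈ N₁, φ q a ∈ N₁) :
    Q →* MulAut N₁ where
  toFun q :=
    { toFun a := ⟨φ q a, hN₁ q a a.2⟩
      invFun a := ⟨φ q⁻¹ a, hN₁ q⁻¹ a a.2⟩
      left_inv a := Subtype.ext <| by simp [map_inv]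
      right_inv a := Subtype.ext <| by simp [map_inv]
      map_mul' a b := Subtype.ext <| map_mul (φ q) (a : N) b }
  map_one' := MulEquiv.ext fun a => Subtype.ext <| by simp
  map_mul' q r := MulEquiv.ext fun a => Subtype.ext <| by simp [MulAut.mul_apply]

def quotientMulAut (φ : Q →* MulAut N) (N₁ : Subgroup N) [N₁.Normal]
    (hN₁ : ∀ q, ∀ a ∈ N₁, φ q a ∈ N₁) : Q →* MulAut (N ⧸ N₁) where
  toFun q := QuotientGroup.congr N₁ N₁ (φ q) <| le_antisymm
    (map_le_iff_le_comap.mpr fun a ha => hN₁ q a ha)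
    (fun a ha => ⟨φ q⁻¹ a, hN₁ q⁻¹ a ha, by simp [map_inv]⟩)
  map_one' := by ext a; induction a using QuotientGroup.induction_on; simp
  map_mul' q r := by
    ext a; induction a using QuotientGroup.induction_on; simp [MulAut.mul_apply]

theorem apply_mem_closure_orbit (φ : Q →* MulAut N) (x : N) (q : Q) {a : N}
    (ha : a ∈ closure (Set.range fun r => φ r x)) : φ q a ∈ closure (Set.range fun r => φ r x) := by
  induction ha using closure_induction with
  | mem _ hy =>
    obtain ⟨r, rfl⟩ := hy
    exact subset_closure ⟨q * r, by simp only [map_mul, MulAut.mul_apply]⟩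
  | one => rw [map_one]; exact one_mem _
  | mul _ _ _ _ hy hz => rw [map_mul]; exact mul_mem hy hz
  | inv _ _ hy => rw [map_inv]; exact inv_mem hy

theorem MulAut.eq_one_of_coprime {σ : MulAut N} (hσ : (orderOf σ).Coprime (Nat.card N))
    {N₁ : Subgroup N} (hfix : ∀ a ∈ N₁, σ a = a) (hquot : ∀ a, a⁻¹ * σ a ∈ N₁) : σ = 1 := by
  ext a
  have hpow : ∀ k : ℕ, (σ ^ k) a = a * (a⁻¹ * σ a) ^ k := by
    intro k
    induction k with
    | zero => simp
    | succ k ih =>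
      rw [pow_succ', MulAut.mul_apply, ih, map_mul, map_pow, hfix _ (hquot a), pow_succ',
        ← mul_assoc, mul_inv_cancel_left]
  have hord : (a⁻¹ * σ a) ^ orderOf σ = 1 := by
    simpa [pow_orderOf_eq_one] using (hpow (orderOf σ)).symm
  have hone : a⁻¹ * σ a = 1 := orderOf_eq_one_iff.mp <|
    Nat.eq_one_of_dvd_coprimes hσ (orderOf_dvd_of_pow_eq_one hord) (orderOf_dvd_natCard _)
  rw [inv_mul_eq_one] at hone
  exact hone.symm

theorem ker_quotientMulAut_inf_ker_restrictMulAut_le (φ : Q →* MulAut N) (N₁ : Subgroup N)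
    [N₁.Normal] (hN₁ : ∀ q, ∀ a ∈ N₁, φ q a ∈ N₁) (hcop : (Nat.card Q).Coprime (Nat.card N)) :
    (quotientMulAut φ N₁ hN₁).ker ⊓ (restrictMulAut φ N₁ hN₁).ker ≤ φ.ker := by
  intro q hq
  obtain ⟨hquot, hres⟩ := mem_inf.mp hq
  rw [MonoidHom.mem_ker] at hquot hres
  refine MonoidHom.mem_ker.mpr <| MulAut.eq_one_of_coprime
    (hcop.coprime_dvd_left ((orderOf_map_dvd φ q).trans (orderOf_dvd_natCard q)))
    (N₁ := N₁) (fun a ha => ?_) (fun a => ?_)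
  · exact congrArg Subtype.val (DFunLike.congr_fun hres ⟨a, ha⟩)
  · exact QuotientGroup.eq.mp (DFunLike.congr_fun hquot (a : N ⧸ N₁)).symm

end CoprimeAction

section CommutativeAction

variable {Q N : Type*} [CommGroup Q] [Group N]

theorem card_le_card_mul_card_ker_of_closure_orbit_eq_top [Finite N] (φ : Q →* MulAut N) (x : N)
    (hx : closure (Set.range fun q => φ q x) = ⊤) : Nat.card Q ≤ Nat.card N * Nat.card φ.ker := by
  have hstab : ∀ q, φ q x = x → φ q = 1 := by
    intro q hq
    have : (φ q).toMonoidHom = MonoidHom.id N := by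
      refine MonoidHom.eq_of_eqOn_dense hx ?_
      rintro _ ⟨r, rfl⟩
      change φ q (φ r x) = φ r x
      rw [← MulAut.mul_apply, ← map_mul, mul_comm, map_mul, MulAut.mul_apply, hq]
    exact MulEquiv.ext fun a => DFunLike.congr_fun this a
  have hinj : Function.Injective fun σ : φ.range => (σ : MulAut N) x := by
    rintro ⟨_, q, rfl⟩ ⟨_, r, rfl⟩ h
    have : φ (r⁻¹ * q) = 1 := hstab _ <| by
      simp only at h
      rw [map_mul, MulAut.mul_apply, h, map_inv, MulAut.inv_apply_self]
    rw [map_mul, map_inv, inv_mul_eq_one] at this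
    exact Subtype.ext this.symm
  calc Nat.card Q = Nat.card φ.range * Nat.card φ.ker := by
        rw [← φ.ker.card_mul_index, index_ker, mul_comm]
    _ ≤ Nat.card N * Nat.card φ.ker := Nat.mul_le_mul_right _ (Nat.card_le_card_of_injective _ hinj)

end CommutativeAction

theorem card_le_card_mul_card_ker {Q N : Type*} [CommGroup Q] [CommGroup N] [Finite Q] [Finite N]
    (φ : Q →* MulAut N) (hcop : (Nat.card Q).Coprime (Nat.card N)) :
    Nat.card Q ≤ Nat.card N * Nat.card φ.ker := by
  induction hn : Nat.card N using Nat.strong_induction_on generalizing Q N with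
  | _ n ih =>
  subst hn
  rcases subsingleton_or_nontrivial N with hN | hN
  · exact card_le_card_mul_card_ker_of_closure_orbit_eq_top φ 1
      (eq_top_iff.mpr fun a _ => by rw [Subsingleton.elim a 1]; exact one_mem _)
  obtain ⟨x, hx⟩ := exists_ne (1 : N)
  set N₁ := closure (Set.range fun q => φ q x)
  by_cases htop : N₁ = ⊤
  · exact card_le_card_mul_card_ker_of_closure_orbit_eq_top φ x htop
  have hN₁ : ∀ q, ∀ a ∈ N₁, φ q a ∈ N₁ := fun q _ => apply_mem_closure_orbit φ x q
  set K := (restrictMulAut φ N₁ hN₁).ker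
  set ψ := (quotientMulAut φ N₁ hN₁).comp K.subtype
  have hcard : Nat.card N = Nat.card (N ⧸ N₁) * Nat.card N₁ :=
    card_eq_card_quotient_mul_card_subgroup N₁
  have hbot : 1 < Nat.card N₁ :=
    (one_lt_card_iff_ne_bot N₁).mpr fun h => hx (mem_bot.mp (h ▸ subset_closure ⟨1, by simp⟩))
  have htop' : 1 < Nat.card (N ⧸ N₁) := one_lt_index_of_ne_top htop
  have hρ : Nat.card Q ≤ Nat.card N₁ * Nat.card K :=
    ih _ (by nlinarith) _ (hcop.coprime_dvd_right (card_subgroup_dvd_card N₁)) rfl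
  have hψ : Nat.card K ≤ Nat.card (N ⧸ N₁) * Nat.card ψ.ker :=
    ih _ (by nlinarith) _ ((hcop.coprime_dvd_left (card_subgroup_dvd_card K)).coprime_dvd_right
      (card_quotient_dvd_card N₁)) rfl
  have hker : Nat.card ψ.ker ≤ Nat.card φ.ker := by
    refine Nat.card_le_card_of_injective
      (fun k => ⟨k.1.1, ker_quotientMulAut_inf_ker_restrictMulAut_le φ N₁ hN₁ hcop
        (mem_inf.mpr ⟨k.2, k.1.2⟩)⟩) fun k l h => ?_
    simp only [Subtype.mk.injEq] at h
    exact Subtype.ext (Subtype.ext h)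
  calc Nat.card Q ≤ Nat.card N₁ * Nat.card K := hρ
    _ ≤ Nat.card N₁ * (Nat.card (N ⧸ N₁) * Nat.card φ.ker) := by gcongr; exact hψ.trans (by gcongr)
    _ = Nat.card N * Nat.card φ.ker := by rw [hcard]; ring

theorem card_le_card_quotient_mul_card_ker {Q N : Type*} [CommGroup Q] [CommGroup N] [Finite Q]
    [Finite N] (φ : Q →* MulAut N) (hcop : (Nat.card Q).Coprime (Nat.card N)) (N₁ : Subgroup N)
    (hfix : ∀ q, ∀ a ∈ N₁, φ q a = a) : Nat.card Q ≤ Nat.card (N ⧸ N₁) * Nat.card φ.ker := by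
  have hN₁ : ∀ q, ∀ a ∈ N₁, φ q a ∈ N₁ := fun q a ha => (hfix q a ha).symm ▸ ha
  have hker : (quotientMulAut φ N₁ hN₁).ker ≤ φ.ker := fun q hq =>
    ker_quotientMulAut_inf_ker_restrictMulAut_le φ N₁ hN₁ hcop <| mem_inf.mpr ⟨hq,
      MonoidHom.mem_ker.mpr <| MulEquiv.ext fun a => Subtype.ext (hfix q a a.2)⟩
  calc Nat.card Q ≤ Nat.card (N ⧸ N₁) * Nat.card (quotientMulAut φ N₁ hN₁).ker :=
        card_le_card_mul_card_ker _ (hcop.coprime_dvd_right (card_quotient_dvd_card N₁))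
    _ ≤ Nat.card (N ⧸ N₁) * Nat.card φ.ker := Nat.mul_le_mul_left _ (card_le_of_le hker)

section Centralizers

variable {G : Type*} [Group G]

theorem Subgroup.card_subgroupOf (H K : Subgroup G) :
    Nat.card (H.subgroupOf K) = Nat.card (H ⊓ K : Subgroup G) := by
  rw [← inf_subgroupOf_right]
  exact Nat.card_congr (subgroupOfEquivOfLe inf_le_right).toEquiv

theorem Subgroup.card_eq_card_quotient_subgroupOf_mul_card_inf (H K : Subgroup G) :
    Nat.card K = Nat.card (K ⧸ H.subgroupOf K) * Nat.card (H ⊓ K : Subgroup G) := by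
  rw [← card_subgroupOf]
  exact card_eq_card_quotient_mul_card_subgroup _

theorem Subgroup.isMulCommutative_of_le {H K : Subgroup G} [IsMulCommutative K] (h : H ≤ K) :
    IsMulCommutative H :=
  le_centralizer_iff_isMulCommutative.mp ((h.trans (le_centralizer K)).trans (centralizer_le h))

theorem Subgroup.centralizer_sup_s14 (H K : Subgroup G) :
    centralizer ((H ⊔ K : Subgroup G) : Set G) = centralizer H ⊓ centralizer K := by
  rw [sup_eq_closure, centralizer_closure]
  ext g
  simp [mem_centralizer_iff, or_imp, forall_and]

variable (K A : Subgroup G) [A.Normal]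

theorem conjNormal_comp_subtype_apply_eq_self_iff (k : K) (a : A) :
    MulAut.conjNormal.comp K.subtype k a = a ↔ (a : G) * k = k * a := by
  rw [← Subtype.coe_inj, MonoidHom.comp_apply, MulAut.conjNormal_apply, mul_inv_eq_iff_eq_mul,
    eq_comm]
  rfl

theorem ker_conjNormal_comp_subtype :
    (MulAut.conjNormal.comp K.subtype : K →* MulAut A).ker = (centralizer A).subgroupOf K := by
  ext k
  simp only [MonoidHom.mem_ker, mem_subgroupOf, mem_centralizer_iff, MulEquiv.ext_iff,
    MulAut.one_apply, conjNormal_comp_subtype_apply_eq_self_iff, Subtype.forall]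
  rfl

end Centralizers

section CoprimeFactorization

variable {G : Type*} [Group G] {A B : Subgroup G}

open scoped IsMulCommutative in
theorem card_le_card_quotient_mul_card_inf_centralizer [Finite G] [A.Normal] [IsMulCommutative A]
    {K : Subgroup G} [IsMulCommutative K] (hcop : (Nat.card K).Coprime (Nat.card A))
    (N₁ : Subgroup G) (hK : K ≤ centralizer N₁) :
    Nat.card K ≤ Nat.card (A ⧸ N₁.subgroupOf A) * Nat.card (K ⊓ centralizer A : Subgroup G) := by
  have := card_le_card_quotient_mul_card_ker (MulAut.conjNormal.comp K.subtype) hcop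
    (N₁.subgroupOf A) fun k a ha => (conjNormal_comp_subtype_apply_eq_self_iff K A k a).mpr
      (hK k.2 a ha)
  rwa [ker_conjNormal_comp_subtype, card_subgroupOf, inf_comm] at this

theorem sup_inf_eq_of_le (hAB : ∀ g : G, ∃ a ∈ A, ∃ b ∈ B, g = a * b) {K : Subgroup G}
    (hK : A ≤ K) : A ⊔ (B ⊓ K) = K := by
  refine le_antisymm (sup_le hK inf_le_right) fun g hg => ?_
  obtain ⟨a, ha, b, hb, rfl⟩ := hAB g
  exact mul_mem_sup ha ⟨hb, (mul_mem_cancel_left (hK ha)).mp hg⟩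

theorem card_sup_mul_card_inf [A.Normal] (H : Subgroup G) :
    Nat.card (A ⊔ H : Subgroup G) * Nat.card (A ⊓ H : Subgroup G) = Nat.card A * Nat.card H := by
  have hH : Nat.card H = Nat.card (A ⊓ H : Subgroup G) * A.relIndex H := by
    rw [← relIndex_bot_left, ← relIndex_mul_relIndex _ _ _ bot_le inf_le_right, relIndex_bot_left,
      inf_relIndex_right]
  have hAH : Nat.card (A ⊔ H : Subgroup G) = Nat.card A * A.relIndex H := by
    rw [← relIndex_sup_left H A, ← relIndex_bot_left,
      ← relIndex_mul_relIndex _ _ _ bot_le le_sup_left, relIndex_bot_left]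
  rw [hH, hAH]
  ring

theorem card_eq_card_mul_card_inf [A.Normal] (hcop : (Nat.card A).Coprime (Nat.card B))
    (hAB : ∀ g : G, ∃ a ∈ A, ∃ b ∈ B, g = a * b) {K : Subgroup G} (hK : A ≤ K) :
    Nat.card K = Nat.card A * Nat.card (B ⊓ K : Subgroup G) := by
  have hbot : A ⊓ (B ⊓ K) = ⊥ :=
    disjoint_iff.mp ((disjoint_of_coprime_natCard hcop).mono_right inf_le_left)
  simpa [sup_inf_eq_of_le hAB hK, hbot] using card_sup_mul_card_inf (A := A) (B ⊓ K)

theorem card_eq_card_inf_mul_card_inf_sup [Finite G] [A.Normal]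
    (hcop : (Nat.card A).Coprime (Nat.card B)) (hAB : ∀ g : G, ∃ a ∈ A, ∃ b ∈ B, g = a * b)
    (H : Subgroup G) :
    Nat.card H = Nat.card (A ⊓ H : Subgroup G) * Nat.card (B ⊓ (A ⊔ H) : Subgroup G) := by
  have h := card_sup_mul_card_inf (A := A) H
  rw [card_eq_card_mul_card_inf hcop hAB le_sup_left] at h
  refine Nat.eq_of_mul_eq_mul_left (Nat.card_pos (α := A)) ?_
  rw [← h]
  ring

theorem le_of_card_quotient_subgroupOf_dvd {n : ℕ} (hcop : (Nat.card A).Coprime n)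
    {H : Subgroup G} (h : Nat.card (A ⧸ H.subgroupOf A) ∣ n) : A ≤ H := by
  rw [← subgroupOf_eq_top, ← index_eq_one, index_eq_card]
  exact Nat.eq_one_of_dvd_coprimes hcop (card_quotient_dvd_card _) h

theorem inf_centralizer_sup_self [IsMulCommutative A] (K : Subgroup G) :
    A ⊓ centralizer ((A ⊔ K : Subgroup G) : Set G) = A ⊓ centralizer K := by
  rw [centralizer_sup_s14, ← inf_assoc, inf_eq_left.mpr (le_centralizer A)]

theorem inf_centralizer_eq_inf_centralizer_inf_sup [IsMulCommutative A]
    (hAB : ∀ g : G, ∃ a ∈ A, ∃ b ∈ B, g = a * b) (H : Subgroup G) :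
    A ⊓ centralizer H = A ⊓ centralizer (B ⊓ (A ⊔ H) : Subgroup G) := by
  rw [← inf_centralizer_sup_self H, ← inf_centralizer_sup_self (B ⊓ (A ⊔ H)),
    sup_inf_eq_of_le hAB le_sup_left]

theorem sup_centralizer_le_centralizer_inf [IsMulCommutative A] (H : Subgroup G) :
    A ⊔ centralizer H ≤ centralizer (A ⊓ H : Subgroup G) :=
  sup_le (le_centralizer_iff.mp (inf_le_left.trans (le_centralizer A)))
    (centralizer_le inf_le_right)

theorem centralizer_centralizer_eq [IsMulCommutative A] [IsMulCommutative B]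
    (hAB : ∀ g : G, ∃ a ∈ A, ∃ b ∈ B, g = a * b) :
    centralizer ((centralizer A : Subgroup G) : Set G) = centralizer A := by
  have : IsMulCommutative (B ⊓ centralizer A : Subgroup G) := isMulCommutative_of_le inf_le_left
  refine le_antisymm (centralizer_le (le_centralizer A)) ?_
  rw [← sup_inf_eq_of_le hAB (le_centralizer A), centralizer_sup_s14]
  exact sup_le (le_inf (le_centralizer A) (le_centralizer_iff.mp inf_le_right))
    (le_inf inf_le_right (le_centralizer _))

theorem card_mul_card_inf_centralizer_le_of_le_left [Finite G] [A.Normal] [IsMulCommutative A]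
    [IsMulCommutative B] (hcop : (Nat.card A).Coprime (Nat.card B)) {X : Subgroup G}
    (hX : X ≤ A) :
    Nat.card X * Nat.card (B ⊓ centralizer X : Subgroup G) ≤
      Nat.card A * Nat.card (B ⊓ centralizer A : Subgroup G) := by
  have : IsMulCommutative (B ⊓ centralizer X : Subgroup G) := isMulCommutative_of_le inf_le_left
  have hK := card_le_card_quotient_mul_card_inf_centralizer (A := A)
    (hcop.symm.coprime_dvd_left (card_dvd_of_le inf_le_left)) X inf_le_right
  rw [inf_assoc, inf_eq_right.mpr (centralizer_le hX)] at hK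
  calc Nat.card X * Nat.card (B ⊓ centralizer X : Subgroup G)
      ≤ Nat.card X * (Nat.card (A ⧸ X.subgroupOf A) *
          Nat.card (B ⊓ centralizer A : Subgroup G)) := Nat.mul_le_mul_left _ hK
    _ = Nat.card A * Nat.card (B ⊓ centralizer A : Subgroup G) := by
      rw [card_eq_card_quotient_subgroupOf_mul_card_inf X A, inf_eq_left.mpr hX]
      ring

theorem eq_of_card_mul_card_inf_centralizer_eq_of_le_left [Finite G]
    (hcop : (Nat.card A).Coprime (Nat.card B)) {X : Subgroup G} (hX : X ≤ A)
    (h : Nat.card X * Nat.card (B ⊓ centralizer X : Subgroup G) =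
      Nat.card A * Nat.card (B ⊓ centralizer A : Subgroup G)) : X = A := by
  rw [card_eq_card_quotient_subgroupOf_mul_card_inf X A, inf_eq_left.mpr hX,
    mul_comm _ (Nat.card X), mul_assoc] at h
  have hdvd : Nat.card (A ⧸ X.subgroupOf A) ∣ Nat.card B :=
    (Dvd.intro _ (Nat.eq_of_mul_eq_mul_left Nat.card_pos h).symm).trans (card_dvd_of_le inf_le_left)
  exact le_antisymm hX (le_of_card_quotient_subgroupOf_dvd hcop hdvd)

theorem card_le_card_quotient_mul_card_inf_centralizer_of_le_right [Finite G] [A.Normal]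
    [IsMulCommutative A] [IsMulCommutative B] (hcop : (Nat.card A).Coprime (Nat.card B))
    {S : Subgroup G} (hS : S ≤ B) :
    Nat.card S ≤ Nat.card (A ⧸ (centralizer S).subgroupOf A) *
      Nat.card (S ⊓ centralizer A : Subgroup G) :=
  have : IsMulCommutative S := isMulCommutative_of_le hS
  card_le_card_quotient_mul_card_inf_centralizer (hcop.symm.coprime_dvd_left (card_dvd_of_le hS))
    _ (le_centralizer_iff.mp le_rfl)

theorem card_mul_card_inf_centralizer_le_of_le_right [Finite G] [A.Normal] [IsMulCommutative A]
    [IsMulCommutative B] (hcop : (Nat.card A).Coprime (Nat.card B)) {S : Subgroup G}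
    (hS : S ≤ B) :
    Nat.card S * Nat.card (A ⊓ centralizer S : Subgroup G) ≤
      Nat.card A * Nat.card (B ⊓ centralizer A : Subgroup G) :=
  calc Nat.card S * Nat.card (A ⊓ centralizer S : Subgroup G)
      ≤ Nat.card (A ⧸ (centralizer S).subgroupOf A) * Nat.card (S ⊓ centralizer A : Subgroup G) *
          Nat.card (A ⊓ centralizer S : Subgroup G) :=
        Nat.mul_le_mul_right _ (card_le_card_quotient_mul_card_inf_centralizer_of_le_right hcop hS)
    _ = Nat.card A * Nat.card (S ⊓ centralizer A : Subgroup G) := by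
      rw [card_eq_card_quotient_subgroupOf_mul_card_inf (centralizer S) A, inf_comm A]
      ring
    _ ≤ Nat.card A * Nat.card (B ⊓ centralizer A : Subgroup G) :=
        Nat.mul_le_mul_left _ (card_le_of_le (inf_le_inf_right _ hS))

theorem eq_of_card_mul_card_inf_centralizer_eq_of_le_right [Finite G] [A.Normal]
    [IsMulCommutative A] [IsMulCommutative B] (hcop : (Nat.card A).Coprime (Nat.card B))
    {S : Subgroup G} (hS : S ≤ B)
    (h : Nat.card S * Nat.card (A ⊓ centralizer S : Subgroup G) =
      Nat.card A * Nat.card (B ⊓ centralizer A : Subgroup G)) : S = B ⊓ centralizer A := by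
  set q := Nat.card (A ⧸ (centralizer S).subgroupOf A)
  set f := Nat.card (A ⊓ centralizer S : Subgroup G)
  set s := Nat.card (S ⊓ centralizer A : Subgroup G)
  set c := Nat.card (B ⊓ centralizer A : Subgroup G)
  have hA : Nat.card A = q * f := by
    rw [card_eq_card_quotient_subgroupOf_mul_card_inf (centralizer S) A, inf_comm]
  have hle : Nat.card S ≤ q * s :=
    card_le_card_quotient_mul_card_inf_centralizer_of_le_right hcop hS
  have hsc : s ≤ c := card_le_of_le (inf_le_inf_right _ hS)
  have hcs : c ≤ s := by
    refine Nat.le_of_mul_le_mul_left ?_ (Nat.card_pos (α := A))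
    calc Nat.card A * c = Nat.card S * f := h.symm
      _ ≤ q * s * f := Nat.mul_le_mul_right _ hle
      _ = Nat.card A * s := by rw [hA]; ring
  have hS' : Nat.card S = q * s := by
    have hf : 0 < f := Nat.card_pos
    refine le_antisymm hle (Nat.le_of_mul_le_mul_right (le_of_eq ?_) hf)
    calc q * s * f = Nat.card A * c := by rw [hA, le_antisymm hsc hcs]; ring
      _ = Nat.card S * f := h.symm
  have hCS : B ⊓ centralizer A ≤ S :=
    (eq_of_le_of_card_ge (inf_le_inf_right _ hS) hcs).symm.le.trans inf_le_left
  have hSA : A ≤ centralizer S := le_of_card_quotient_subgroupOf_dvd hcop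
    ((Dvd.intro _ hS'.symm).trans (card_dvd_of_le hS))
  exact le_antisymm (le_inf hS (le_centralizer_iff.mp hSA)) hCS

theorem eq_and_eq_of_sq_le_mul {u v d : ℕ} (hu : u ≤ d) (hv : v ≤ d) (h : d ^ 2 ≤ u * v) :
    u = d ∧ v = d := by
  constructor <;> nlinarith

theorem cdMeasure_le_mul [Finite G] [A.Normal] [IsMulCommutative A]
    (hcop : (Nat.card A).Coprime (Nat.card B)) (hAB : ∀ g : G, ∃ a ∈ A, ∃ b ∈ B, g = a * b)
    (H : Subgroup G) :
    cdMeasure G H ≤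
      (Nat.card (A ⊓ H : Subgroup G) *
          Nat.card (B ⊓ centralizer (A ⊓ H : Subgroup G) : Subgroup G)) *
        (Nat.card (B ⊓ (A ⊔ H) : Subgroup G) *
          Nat.card (A ⊓ centralizer (B ⊓ (A ⊔ H) : Subgroup G) : Subgroup G)) := by
  have hle : Nat.card (B ⊓ (A ⊔ centralizer H) : Subgroup G) ≤
      Nat.card (B ⊓ centralizer (A ⊓ H : Subgroup G) : Subgroup G) :=
    card_le_of_le (inf_le_inf_left B (sup_centralizer_le_centralizer_inf H))
  rw [cdMeasure, card_eq_card_inf_mul_card_inf_sup hcop hAB H,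
    card_eq_card_inf_mul_card_inf_sup hcop hAB (centralizer H),
    inf_centralizer_eq_inf_centralizer_inf_sup hAB H]
  calc _ = (Nat.card (A ⊓ H : Subgroup G) *
          Nat.card (B ⊓ (A ⊔ centralizer H) : Subgroup G)) *
        (Nat.card (B ⊓ (A ⊔ H) : Subgroup G) *
          Nat.card (A ⊓ centralizer (B ⊓ (A ⊔ H) : Subgroup G) : Subgroup G)) := by ring
    _ ≤ _ := by gcongr

theorem cdMeasure_le [Finite G] [A.Normal] [IsMulCommutative A] [IsMulCommutative B]
    (hcop : (Nat.card A).Coprime (Nat.card B)) (hAB : ∀ g : G, ∃ a ∈ A, ∃ b ∈ B, g = a * b)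
    (H : Subgroup G) :
    cdMeasure G H ≤ (Nat.card A * Nat.card (B ⊓ centralizer A : Subgroup G)) ^ 2 :=
  (cdMeasure_le_mul hcop hAB H).trans <| (sq _).ge.trans' <| Nat.mul_le_mul
    (card_mul_card_inf_centralizer_le_of_le_left hcop inf_le_left)
    (card_mul_card_inf_centralizer_le_of_le_right hcop inf_le_left)

theorem eq_of_cdMeasure_eq [Finite G] [A.Normal] [IsMulCommutative A] [IsMulCommutative B]
    (hcop : (Nat.card A).Coprime (Nat.card B)) (hAB : ∀ g : G, ∃ a ∈ A, ∃ b ∈ B, g = a * b)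
    {H : Subgroup G}
    (h : cdMeasure G H = (Nat.card A * Nat.card (B ⊓ centralizer A : Subgroup G)) ^ 2) :
    H = A ⊔ (B ⊓ centralizer A) := by
  obtain ⟨hX, hS⟩ := eq_and_eq_of_sq_le_mul
    (card_mul_card_inf_centralizer_le_of_le_left hcop inf_le_left)
    (card_mul_card_inf_centralizer_le_of_le_right hcop inf_le_left)
    (h ▸ cdMeasure_le_mul hcop hAB H)
  have hAH : A ≤ H :=
    inf_eq_left.mp (eq_of_card_mul_card_inf_centralizer_eq_of_le_left hcop inf_le_left hX)
  have hBH := eq_of_card_mul_card_inf_centralizer_eq_of_le_right hcop inf_le_left hS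
  rw [sup_eq_right.mpr hAH] at hBH
  rw [← hBH, sup_inf_eq_of_le hAB hAH]

theorem cdMeasure_sup_inf_centralizer [A.Normal] [IsMulCommutative A] [IsMulCommutative B]
    (hcop : (Nat.card A).Coprime (Nat.card B)) (hAB : ∀ g : G, ∃ a ∈ A, ∃ b ∈ B, g = a * b) :
    cdMeasure G (A ⊔ (B ⊓ centralizer A)) =
      (Nat.card A * Nat.card (B ⊓ centralizer A : Subgroup G)) ^ 2 := by
  rw [sup_inf_eq_of_le hAB (le_centralizer A), cdMeasure, centralizer_centralizer_eq hAB,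
    card_eq_card_mul_card_inf hcop hAB (le_centralizer A), sq]

end CoprimeFactorization

theorem stmt_14 (G : Type*) [Group G] [Finite G]
    (A B : Subgroup G) (hA : IsMulCommutative A) (hB : IsMulCommutative B)
    (hcop : Nat.Coprime (Nat.card A) (Nat.card B)) [A.Normal]
    (hAB : ∀ g : G, ∃ a ∈ A, ∃ b ∈ B, g = a * b) :
    cdMeasure G (A ⊔ (B ⊓ Subgroup.centralizer (A : Set G))) =
      Nat.card A ^ 2 * Nat.card (B ⊓ Subgroup.centralizer (A : Set G) : Subgroup G) ^ 2 ∧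
    CD G = {A ⊔ (B ⊓ Subgroup.centralizer (A : Set G))} := by
  have hmax := cdMeasure_sup_inf_centralizer hcop hAB
  refine ⟨hmax.trans (mul_pow _ _ 2), Set.ext fun H => ⟨fun hH => ?_, ?_⟩⟩
  · exact eq_of_cdMeasure_eq hcop hAB <|
      le_antisymm (cdMeasure_le hcop hAB H) (hmax ▸ hH _)
  · rintro rfl K
    exact hmax ▸ cdMeasure_le hcop hAB K
end

section
/- Let G be a finite group and H a subgroup of G such that G = H·Z(G), i.e. every element of G is a product of an element of H and a central element. Then CD(G) = { X·Z(G) : X ∈ CD(H) }, where CD(H) is the Chermak-Delgado lattice of the group H and X·Z(G) denotes the subgroup of G generated by (the image in G of) X together with Z(G); moreover the map X ↦ X·Z(G) is a lattice isomorphism from CD(H) onto CD(G). -/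
open Subgroup

section General

variable {G : Type*} [Group G] [Finite G]

lemma card_sup_normal (A N : Subgroup G) [N.Normal] :
    Nat.card (A ⊔ N : Subgroup G) * Nat.card (N ⊓ A : Subgroup G)
      = Nat.card N * Nat.card A := by
  have h1 : Nat.card (N.subgroupOf (A ⊔ N)) * N.relIndex (A ⊔ N)
      = Nat.card (A ⊔ N : Subgroup G) := Subgroup.card_mul_index (N.subgroupOf (A ⊔ N))
  have h2 : Nat.card (N.subgroupOf A) * N.relIndex A = Nat.card A :=
    Subgroup.card_mul_index (N.subgroupOf A)
  have h3 : N.relIndex (A ⊔ N) = N.relIndex A := Subgroup.relIndex_sup_right A N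
  have h4 : Nat.card (N.subgroupOf (A ⊔ N)) = Nat.card N :=
    Nat.card_congr (Subgroup.subgroupOfEquivOfLe le_sup_right).toEquiv
  have h5 : Nat.card (N.subgroupOf A) = Nat.card (N ⊓ A : Subgroup G) := by
    rw [← Subgroup.inf_subgroupOf_right N A]
    exact Nat.card_congr (Subgroup.subgroupOfEquivOfLe inf_le_right).toEquiv
  rw [h3, h4] at h1
  rw [h5] at h2
  calc Nat.card (A ⊔ N : Subgroup G) * Nat.card (N ⊓ A : Subgroup G)
      = Nat.card N * N.relIndex A * Nat.card (N ⊓ A : Subgroup G) := by rw [h1]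
    _ = Nat.card N * (Nat.card (N ⊓ A : Subgroup G) * N.relIndex A) := by ring
    _ = Nat.card N * Nat.card A := by rw [h2]

lemma centralizer_sup_center_s16 (A : Subgroup G) :
    Subgroup.centralizer ((A ⊔ Subgroup.center G : Subgroup G) : Set G)
      = Subgroup.centralizer (A : Set G) := by
  refine le_antisymm (Subgroup.centralizer_le (SetLike.coe_subset_coe.mpr le_sup_left)) ?_
  rw [Subgroup.le_centralizer_iff]
  exact sup_le (Subgroup.le_centralizer_iff.mp le_rfl) (Subgroup.center_le_centralizer _)

lemma measure_le_sup_center (K : Subgroup G) :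
    cdMeasure G K ≤ cdMeasure G (K ⊔ Subgroup.center G) := by
  unfold cdMeasure
  rw [centralizer_sup_center_s16]
  exact Nat.mul_le_mul_right _ (Subgroup.card_le_of_le le_sup_left)

lemma center_le_of_mem_CD_s16 {K : Subgroup G} (hK : K ∈ CD G) : Subgroup.center G ≤ K := by
  have h3 : cdMeasure G (K ⊔ Subgroup.center G) = cdMeasure G K :=
    le_antisymm (hK _) (measure_le_sup_center K)
  unfold cdMeasure at h3
  rw [centralizer_sup_center_s16] at h3
  have hc : 0 < Nat.card (Subgroup.centralizer (K : Set G)) := Nat.card_pos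
  have h4 : Nat.card (K ⊔ Subgroup.center G : Subgroup G) = Nat.card K :=
    Nat.eq_of_mul_eq_mul_right hc h3
  have h5 : K = K ⊔ Subgroup.center G :=
    Subgroup.eq_of_le_of_card_ge le_sup_left h4.le
  exact le_sup_right.trans h5.ge

end General

section Main

variable {G : Type*} [Group G] [Finite G] {H : Subgroup G}
  (hHZ : ∀ g : G, ∃ h ∈ H, ∃ z ∈ Subgroup.center G, g = h * z)

include hHZ

lemma map_center : Subgroup.map H.subtype (Subgroup.center H)
    = Subgroup.center G ⊓ H := by
  apply le_antisymm
  · rintro g ⟨h, hh, rfl⟩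
    refine ⟨Subgroup.mem_center_iff.mpr fun g => ?_, h.2⟩
    obtain ⟨a, haH, z, hz, rfl⟩ := hHZ g
    have ha : a * (h : G) = (h : G) * a := by
      have := Subgroup.mem_center_iff.mp hh ⟨a, haH⟩
      exact congrArg Subtype.val this
    have hzc := Subgroup.mem_center_iff.mp hz
    calc a * z * (h : G) = a * ((h : G) * z) := by rw [mul_assoc, hzc]
      _ = (h : G) * (a * z) := by rw [← mul_assoc, ha, mul_assoc]
  · rintro g ⟨hgZ, hgH⟩
    exact ⟨⟨g, hgH⟩, Subgroup.mem_center_iff.mpr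
      (fun b => Subtype.ext (Subgroup.mem_center_iff.mp hgZ (b : G))), rfl⟩

lemma centralizer_map (X : Subgroup H) :
    Subgroup.centralizer ((X.map H.subtype : Subgroup G) : Set G)
      = (Subgroup.centralizer (X : Set H)).map H.subtype ⊔ Subgroup.center G := by
  apply le_antisymm
  · intro g hg
    obtain ⟨h, hh, z, hz, rfl⟩ := hHZ g
    have hhc : h ∈ Subgroup.centralizer ((X.map H.subtype : Subgroup G) : Set G) := by
      have he : h = (h * z) * z⁻¹ := by group
      rw [he]
      exact mul_mem hg (inv_mem (Subgroup.center_le_centralizer _ hz))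
    have hc' : (⟨h, hh⟩ : H) ∈ Subgroup.centralizer (X : Set H) := by
      rw [Subgroup.mem_centralizer_iff]
      intro b hb
      refine Subtype.ext ?_
      exact Subgroup.mem_centralizer_iff.mp hhc (b : G) ⟨b, hb, rfl⟩
    exact mul_mem ((le_sup_left :
        (Subgroup.centralizer (X : Set H)).map H.subtype ≤ _) ⟨⟨h, hh⟩, hc', rfl⟩)
      ((le_sup_right : Subgroup.center G ≤ _) hz)
  · refine sup_le ?_ (Subgroup.center_le_centralizer _)
    rintro g ⟨c, hc, rfl⟩
    rw [Subgroup.mem_centralizer_iff]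
    rintro b ⟨x, hx, rfl⟩
    exact congrArg Subtype.val (Subgroup.mem_centralizer_iff.mp hc x hx)

lemma sup_decomp {K : Subgroup G} (hZK : Subgroup.center G ≤ K) :
    (K.comap H.subtype).map H.subtype ⊔ Subgroup.center G = K := by
  rw [Subgroup.map_comap_eq, Subgroup.subtype_range]
  apply le_antisymm (sup_le inf_le_right hZK)
  intro k hk
  obtain ⟨h, hh, z, hz, rfl⟩ := hHZ k
  have hhK : h ∈ K := by
    have he : h = (h * z) * z⁻¹ := by group
    rw [he]
    exact mul_mem hk (inv_mem (hZK hz))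
  exact mul_mem ((le_sup_left : H ⊓ K ≤ _) ⟨hh, hhK⟩)
    ((le_sup_right : Subgroup.center G ≤ _) hz)

lemma comap_phi {X : Subgroup H} (hZX : Subgroup.center H ≤ X) :
    (X.map H.subtype ⊔ Subgroup.center G).comap H.subtype = X := by
  apply le_antisymm
  · intro h hh
    have hh' : (h : G) ∈ (X.map H.subtype ⊔ Subgroup.center G : Subgroup G) := hh
    rw [SetLike.mem_coe.symm, Subgroup.mul_normal] at hh'
    obtain ⟨a, ha, z, hz, haz⟩ := hh'
    obtain ⟨x, hx, rfl⟩ := ha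
    have hzeq : (x : G) * z = (h : G) := haz
    have hzH : z ∈ H := by
      have : z = ((x : G))⁻¹ * (h : G) := by
        rw [← hzeq, ← mul_assoc, inv_mul_cancel, one_mul]
      rw [this]
      exact mul_mem (inv_mem x.2) h.2
    have hzX : (⟨z, hzH⟩ : H) ∈ X := by
      apply hZX
      have : z ∈ Subgroup.map H.subtype (Subgroup.center H) := by
        rw [map_center hHZ]; exact ⟨hz, hzH⟩
      obtain ⟨w, hw, hwz⟩ := this
      have : w = ⟨z, hzH⟩ := Subtype.ext hwz
      rwa [← this]
    have : (h : G) ∈ X.map H.subtype := by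
      rw [← haz]
      exact mul_mem ⟨x, hx, rfl⟩ ⟨⟨z, hzH⟩, hzX, rfl⟩
    obtain ⟨y, hy, hyh⟩ := this
    rwa [show y = h from Subtype.ext hyh] at hy
  · exact le_trans (Subgroup.le_comap_map _ _)
      (Subgroup.comap_mono le_sup_left)

lemma card_sup_eq {Y : Subgroup H} (hZY : Subgroup.center H ≤ Y) :
    Nat.card (Y.map H.subtype ⊔ Subgroup.center G : Subgroup G)
        * Nat.card (Subgroup.center H)
      = Nat.card Y * Nat.card (Subgroup.center G) := by
  have h0 := card_sup_normal (Y.map H.subtype) (Subgroup.center G)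
  have h1 : Subgroup.center G ⊓ Y.map H.subtype
      = (Subgroup.center H).map H.subtype := by
    rw [map_center hHZ]
    apply le_antisymm
    · exact fun g hg => ⟨hg.1, Subgroup.map_subtype_le Y hg.2⟩
    · intro g hg
      refine ⟨hg.1, ?_⟩
      have : g ∈ Subgroup.map H.subtype (Subgroup.center H) := by
        rw [map_center hHZ]; exact hg
      exact Subgroup.map_mono hZY this
  have h2 : Nat.card ((Subgroup.center H).map H.subtype : Subgroup G)
      = Nat.card (Subgroup.center H) :=
    (Nat.card_congr (Subgroup.equivMapOfInjective _ H.subtype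
      H.subtype_injective).toEquiv).symm
  have h3 : Nat.card (Y.map H.subtype : Subgroup G) = Nat.card Y :=
    (Nat.card_congr (Subgroup.equivMapOfInjective _ H.subtype
      H.subtype_injective).toEquiv).symm
  rw [h1, h2, h3] at h0
  rw [h0, mul_comm]

lemma measure_phi {X : Subgroup H} (hZX : Subgroup.center H ≤ X) :
    cdMeasure G (X.map H.subtype ⊔ Subgroup.center G) * (Nat.card (Subgroup.center H)) ^ 2
      = cdMeasure H X * (Nat.card (Subgroup.center G)) ^ 2 := by
  have e1 := card_sup_eq hHZ hZX
  have e2 := card_sup_eq hHZ (Subgroup.center_le_centralizer (X : Set H))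
  unfold cdMeasure
  rw [centralizer_sup_center_s16, centralizer_map hHZ]
  rw [sq, sq, mul_mul_mul_comm, e1, e2, mul_mul_mul_comm]

lemma phi_mem_CD {X : Subgroup H} (hX : X ∈ CD H) :
    X.map H.subtype ⊔ Subgroup.center G ∈ CD G := by
  have hZX : Subgroup.center H ≤ X := center_le_of_mem_CD_s16 hX
  intro K
  have hzh : 0 < (Nat.card (Subgroup.center H)) ^ 2 := pow_pos Nat.card_pos 2
  refine Nat.le_of_mul_le_mul_right ?_ hzh
  set Y := (K ⊔ Subgroup.center G).comap H.subtype with hY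
  have hZY : Subgroup.center H ≤ Y := by
    intro h hh
    have : (h : G) ∈ Subgroup.center G := by
      have : (h : G) ∈ Subgroup.map H.subtype (Subgroup.center H) := ⟨h, hh, rfl⟩
      rw [map_center hHZ] at this
      exact this.1
    exact (le_sup_right : Subgroup.center G ≤ K ⊔ Subgroup.center G) this
  have hphiY : Y.map H.subtype ⊔ Subgroup.center G = K ⊔ Subgroup.center G :=
    sup_decomp hHZ le_sup_right
  have e1 := measure_phi hHZ hZY
  rw [hphiY] at e1
  have e2 := measure_phi hHZ hZX
  calc cdMeasure G K * (Nat.card (Subgroup.center H)) ^ 2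
      ≤ cdMeasure G (K ⊔ Subgroup.center G) * (Nat.card (Subgroup.center H)) ^ 2 :=
        Nat.mul_le_mul_right _ (measure_le_sup_center K)
    _ = cdMeasure H Y * (Nat.card (Subgroup.center G)) ^ 2 := e1
    _ ≤ cdMeasure H X * (Nat.card (Subgroup.center G)) ^ 2 :=
        Nat.mul_le_mul_right _ (hX Y)
    _ = cdMeasure G (X.map H.subtype ⊔ Subgroup.center G)
          * (Nat.card (Subgroup.center H)) ^ 2 := e2.symm

lemma comap_mem_CD {K : Subgroup G} (hK : K ∈ CD G) :
    K.comap H.subtype ∈ CD H := by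
  have hZK : Subgroup.center G ≤ K := center_le_of_mem_CD_s16 hK
  have hZY : Subgroup.center H ≤ K.comap H.subtype := by
    intro h hh
    have : (h : G) ∈ Subgroup.center G := by
      have : (h : G) ∈ Subgroup.map H.subtype (Subgroup.center H) := ⟨h, hh, rfl⟩
      rw [map_center hHZ] at this
      exact this.1
    exact hZK this
  have hphiY : (K.comap H.subtype).map H.subtype ⊔ Subgroup.center G = K :=
    sup_decomp hHZ hZK
  intro W
  have hz : 0 < (Nat.card (Subgroup.center G)) ^ 2 := pow_pos Nat.card_pos 2
  refine Nat.le_of_mul_le_mul_right ?_ hz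
  have e1 := measure_phi hHZ (le_sup_right : Subgroup.center H ≤ W ⊔ Subgroup.center H)
  have e2 := measure_phi hHZ hZY
  rw [hphiY] at e2
  calc cdMeasure H W * (Nat.card (Subgroup.center G)) ^ 2
      ≤ cdMeasure H (W ⊔ Subgroup.center H) * (Nat.card (Subgroup.center G)) ^ 2 :=
        Nat.mul_le_mul_right _ (measure_le_sup_center W)
    _ = cdMeasure G ((W ⊔ Subgroup.center H).map H.subtype ⊔ Subgroup.center G)
          * (Nat.card (Subgroup.center H)) ^ 2 := e1.symm
    _ ≤ cdMeasure G K * (Nat.card (Subgroup.center H)) ^ 2 :=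
        Nat.mul_le_mul_right _ (hK _)
    _ = cdMeasure H (K.comap H.subtype) * (Nat.card (Subgroup.center G)) ^ 2 := e2

end Main

theorem stmt_16 (G : Type*) [Group G] [Finite G] (H : Subgroup G)
    (hHZ : ∀ g : G, ∃ h ∈ H, ∃ z ∈ Subgroup.center G, g = h * z) :
    CD G = {K : Subgroup G | ∃ X ∈ CD H,
      K = Subgroup.map H.subtype X ⊔ Subgroup.center G} ∧
    ∃ e : CD H ≃o CD G, ∀ X : CD H,
      (e X : Subgroup G) =
        Subgroup.map H.subtype (X : Subgroup H) ⊔ Subgroup.center G := by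
  constructor
  · ext K
    constructor
    · intro hK
      exact ⟨K.comap H.subtype, comap_mem_CD hHZ hK,
        (sup_decomp hHZ (center_le_of_mem_CD_s16 hK)).symm⟩
    · rintro ⟨X, hX, rfl⟩
      exact phi_mem_CD hHZ hX
  · refine ⟨⟨⟨fun X => ⟨(X : Subgroup H).map H.subtype ⊔ Subgroup.center G,
        phi_mem_CD hHZ X.2⟩,
      fun K => ⟨(K : Subgroup G).comap H.subtype, comap_mem_CD hHZ K.2⟩,
      fun X => Subtype.ext (comap_phi hHZ (center_le_of_mem_CD_s16 X.2)),
      fun K => Subtype.ext (sup_decomp hHZ (center_le_of_mem_CD_s16 K.2))⟩, ?_⟩,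
      fun X => rfl⟩
    intro X Y
    constructor
    · intro hle
      have hX := center_le_of_mem_CD_s16 X.2
      have hY := center_le_of_mem_CD_s16 Y.2
      have : (X : Subgroup H) ≤ (Y : Subgroup H) := by
        rw [← comap_phi hHZ hX, ← comap_phi hHZ hY]
        exact Subgroup.comap_mono hle
      exact this
    · intro hle
      exact sup_le_sup_right (Subgroup.map_mono hle) _
end
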